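/- arXiv:2005.05766 — 9 statements merged into one kernel-verified Lean document; each statement's English description precedes it below -/
import Mathlib

section
/- Let f : ℝ^N → ℝ be a convex function and K > 0 a constant such that f(x+h) + f(x−h) − 2 f(x) ≤ K ‖h‖² for all x, h ∈ ℝ^N. Then f is differentiable on ℝ^N and its gradient ∇f is Lipschitz continuous with Lipschitz constant K. -/
open InnerProductSpace

local notation "⟪" x ", " y "⟫" => @inner ℝ _ _ x y

lemma exists_subgradient' {E : Type*} [NormedAddCommGroup E] [InnerProductSpace ℝ E]
    [CompleteSpace E] {f : E → ℝ} (hconv : ConvexOn ℝ Set.univ f) (hf : Continuous f) (x : E) :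
    ∃ p : E, ∀ y, ⟪p, y - x⟫ ≤ f y - f x := by
  set S : Set (E × ℝ) := {q | f q.1 < q.2} with hS
  have hopen : IsOpen S := isOpen_lt (hf.comp continuous_fst) continuous_snd
  have hconvS : Convex ℝ S := by
    intro a ha b hb s t hs ht hst
    have hfa : f a.1 < a.2 := ha
    have hfb : f b.1 < b.2 := hb
    have key : f (s • a.1 + t • b.1) ≤ s * f a.1 + t * f b.1 :=
      hconv.2 (Set.mem_univ a.1) (Set.mem_univ b.1) hs ht hst
    have : f ((s • a + t • b).1) < (s • a + t • b).2 := by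
      simp only [Prod.fst_add, Prod.snd_add, Prod.smul_fst, Prod.smul_snd, smul_eq_mul]
      rcases lt_or_ge 0 s with hs' | hs'
      · nlinarith [mul_le_mul_of_nonneg_left hfb.le ht]
      · have hs0 : s = 0 := le_antisymm hs' hs
        have ht1 : t = 1 := by linarith
        simpa [hs0, ht1] using hfb
    exact this
  have hx : (x, f x) ∉ S := by simp [hS]
  obtain ⟨L, sep⟩ := geometric_hahn_banach_open_point hconvS hopen hx
  set c : ℝ := L (0, 1) with hc
  have hL : ∀ (y : E) (t : ℝ), L (y, t) = L (y, 0) + t * c := by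
    intro y t
    have : (y, t) = (y, (0:ℝ)) + t • ((0:E), (1:ℝ)) := by
      simp [Prod.ext_iff]
    rw [this, map_add, map_smul, smul_eq_mul]
  have hcneg : c < 0 := by
    have := sep (x, f x + 1) (by simp [hS])
    rw [hL x (f x + 1), hL x (f x)] at this
    linarith
  have key : ∀ y : E, L (y, 0) + c * f y ≤ L (x, 0) + c * f x := by
    intro y
    have h1 : ∀ ε : ℝ, 0 < ε → L (y, 0) + (f y + ε) * c < L (x, 0) + f x * c := by
      intro ε hε
      have := sep (y, f y + ε) (by simp [hS]; linarith)
      rwa [hL y (f y + ε), hL x (f x)] at this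
    by_contra hcon
    push_neg at hcon
    set A := L (y, 0) + c * f y
    set B := L (x, 0) + c * f x
    have hε : 0 < (A - B) / (-c) := div_pos (by linarith) (by linarith)
    have h2 := h1 _ hε
    have hcne : c ≠ 0 := ne_of_lt hcneg
    have h3 : ((A - B) / (-c)) * c = B - A := by
      have h5 : (A - B) / (-c) * c = (A - B) * (c / (-c)) := by ring
      rw [h5, div_neg, div_self hcne]; ring
    have hA : A = L (y, 0) + c * f y := rfl
    have hB : B = L (x, 0) + c * f x := rfl
    have h4 : (f y + (A - B) / (-c)) * c = c * f y + ((A - B) / (-c)) * c := by ring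
    rw [h4] at h2
    linarith
  refine ⟨(toDual ℝ E).symm ((-c)⁻¹ • (L.comp (ContinuousLinearMap.inl ℝ E ℝ))), ?_⟩
  intro y
  have hip : ∀ v : E, ⟪(toDual ℝ E).symm ((-c)⁻¹ • (L.comp (ContinuousLinearMap.inl ℝ E ℝ))), v⟫
      = (-c)⁻¹ * L (v, 0) := by
    intro v
    rw [toDual_symm_apply]
    simp
  rw [hip]
  have hsub : L (y - x, 0) = L (y, 0) - L (x, 0) := by
    have : ((y - x, (0:ℝ)) : E × ℝ) = (y, (0:ℝ)) - (x, (0:ℝ)) := by simp [Prod.ext_iff]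
    rw [this, map_sub]
  rw [hsub]
  have hc' : (0:ℝ) < -c := by linarith
  rw [inv_mul_le_iff₀ hc']
  have := key y
  nlinarith


lemma quad_upper' {E : Type*} [NormedAddCommGroup E] [InnerProductSpace ℝ E]
    {f : E → ℝ} {K : ℝ} (hK : 0 ≤ K)
    (hsd : ∀ x h : E, f (x + h) + f (x - h) - 2 * f x ≤ K * ‖h‖ ^ 2)
    {x p : E} (hp : ∀ y, ⟪p, y - x⟫ ≤ f y - f x) (h : E) :
    f (x + h) - f x - ⟪p, h⟫ ≤ K / 2 * ‖h‖ ^ 2 := by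
  set φ : ℝ → ℝ := fun t => f (x + t • h) - f x - t * ⟪p, h⟫ with hφ
  have F1 : ∀ t : ℝ, 0 ≤ φ t := by
    intro t
    have := hp (x + t • h)
    rw [add_sub_cancel_left, real_inner_smul_right] at this
    simp only [hφ]
    linarith
  have normsmul : ∀ t : ℝ, ‖t • h‖ ^ 2 = t ^ 2 * ‖h‖ ^ 2 := by
    intro t
    rw [norm_smul, mul_pow, Real.norm_eq_abs, sq_abs]
  have F2 : ∀ t : ℝ, φ t ≤ K * t ^ 2 * ‖h‖ ^ 2 := by
    intro t
    have h2 := hsd x (t • h)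
    rw [normsmul] at h2
    have h3 := F1 (-t)
    have e1 : x + (-t) • h = x - t • h := by
      rw [neg_smul, ← sub_eq_add_neg]
    simp only [hφ, e1] at h3 ⊢
    have e2 : -t * ⟪p, h⟫ = -(t * ⟪p, h⟫) := by ring
    rw [e2] at h3
    nlinarith
  have F3 : ∀ t : ℝ, φ (2 * t) ≤ 2 * φ t + K * t ^ 2 * ‖h‖ ^ 2 := by
    intro t
    have h2 := hsd (x + t • h) (t • h)
    rw [normsmul] at h2
    have e1 : x + t • h + t • h = x + (2 * t) • h := by
      rw [two_mul, add_smul]; abel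
    have e2 : x + t • h - t • h = x := by abel
    rw [e1, e2] at h2
    simp only [hφ]
    nlinarith
  have key : ∀ n : ℕ, φ 1 ≤ 2 ^ n * φ ((2 ^ n : ℝ)⁻¹)
      + K * ‖h‖ ^ 2 * (1 / 2) * (1 - (2 ^ n : ℝ)⁻¹) := by
    intro n
    induction n with
    | zero => simp
    | succ n ih =>
      set a : ℝ := 2 ^ n with ha
      have hapos : (0 : ℝ) < a := by positivity
      have hane : a ≠ 0 := ne_of_gt hapos
      have hpow : (2 : ℝ) ^ (n + 1) = a * 2 := by rw [pow_succ]
      have h3 := F3 ((a * 2)⁻¹)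
      have e1 : 2 * (a * 2)⁻¹ = a⁻¹ := by field_simp
      rw [e1] at h3
      have e2 : a * ((a * 2)⁻¹) ^ 2 = (a * 2)⁻¹ * (1 / 2) := by
        field_simp
      have e3 : (1 : ℝ) / 2 * (1 - a⁻¹) + (a * 2)⁻¹ * (1 / 2) = (1 / 2) * (1 - (a * 2)⁻¹) := by
        field_simp; ring
      have h4 := mul_le_mul_of_nonneg_left h3 hapos.le
      rw [hpow]
      nlinarith [F1 ((a * 2)⁻¹), mul_nonneg (mul_nonneg hK (sq_nonneg ‖h‖)) hapos.le]
  have lim : Filter.Tendsto (fun n : ℕ => K * ‖h‖ ^ 2 * (1 / 2) + K * ‖h‖ ^ 2 * ((2 : ℝ) ^ n)⁻¹)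
      Filter.atTop (nhds (K * ‖h‖ ^ 2 * (1 / 2) + K * ‖h‖ ^ 2 * 0)) := by
    apply Filter.Tendsto.add tendsto_const_nhds
    apply Filter.Tendsto.const_mul
    have : ∀ n : ℕ, ((2 : ℝ) ^ n)⁻¹ = (2⁻¹ : ℝ) ^ n := fun n => (inv_pow 2 n).symm
    simp only [this]
    exact tendsto_pow_atTop_nhds_zero_of_lt_one (by norm_num) (by norm_num)
  have bound : ∀ n : ℕ, φ 1 ≤ K * ‖h‖ ^ 2 * (1 / 2) + K * ‖h‖ ^ 2 * ((2 : ℝ) ^ n)⁻¹ := by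
    intro n
    have h1 := key n
    have h2 := F2 ((2 ^ n : ℝ)⁻¹)
    have hapos : (0 : ℝ) < 2 ^ n := by positivity
    have h5 : (2 : ℝ) ^ n * (K * ((2 ^ n : ℝ)⁻¹) ^ 2 * ‖h‖ ^ 2)
        = K * ‖h‖ ^ 2 * ((2 : ℝ) ^ n)⁻¹ := by
      field_simp
    have h6 := mul_le_mul_of_nonneg_left h2 hapos.le
    rw [h5] at h6
    have h7 : (0:ℝ) ≤ K * ‖h‖ ^ 2 := mul_nonneg hK (sq_nonneg ‖h‖)
    have h8 : (0:ℝ) ≤ ((2 : ℝ) ^ n)⁻¹ := inv_nonneg.2 hapos.le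
    nlinarith
  have final : φ 1 ≤ K * ‖h‖ ^ 2 * (1 / 2) + K * ‖h‖ ^ 2 * 0 := ge_of_tendsto' lim bound
  simp only [hφ, one_smul, one_mul] at final
  linarith

/-- A convex function on `ℝ^N` whose second differences are bounded by `K‖h‖²` is
differentiable with a `K`-Lipschitz gradient. -/
theorem convex_second_difference_bound_implies_C11
    {N : ℕ} (f : EuclideanSpace ℝ (Fin N) → ℝ) (K : ℝ) (hK : 0 < K)
    (hconv : ConvexOn ℝ Set.univ f)
    (hsd : ∀ x h : EuclideanSpace ℝ (Fin N),
      f (x + h) + f (x - h) - 2 * f x ≤ K * ‖h‖ ^ 2) :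
    Differentiable ℝ f ∧ LipschitzWith K.toNNReal (fun x => gradient f x) := by
  have hcont : Continuous f := hconv.locallyLipschitz.continuous
  choose P hP using fun x => exists_subgradient' hconv hcont x
  have hQ : ∀ x h, f (x + h) - f x - ⟪P x, h⟫ ≤ K / 2 * ‖h‖ ^ 2 :=
    fun x h => quad_upper' hK.le hsd (hP x) h
  have hgrad : ∀ x, HasGradientAt f (P x) x := by
    intro x
    rw [hasGradientAt_iff_hasFDerivAt, hasFDerivAt_iff_isLittleO_nhds_zero,
      Asymptotics.isLittleO_iff]
    intro c hc
    have hr : (0:ℝ) < 2 * c / K := by positivity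
    filter_upwards [Metric.ball_mem_nhds (0 : EuclideanSpace ℝ (Fin N)) hr] with h hh
    rw [Metric.mem_ball, dist_zero_right] at hh
    have h1 : 0 ≤ f (x + h) - f x - ⟪P x, h⟫ := by
      have := hP x (x + h); rw [add_sub_cancel_left] at this; linarith
    have h2 := hQ x h
    have : |f (x + h) - f x - (toDual ℝ _ (P x)) h| ≤ c * ‖h‖ := by
      rw [toDual_apply_apply, abs_of_nonneg h1]
      have h3 : K / 2 * (2 * c / K) = c := by field_simp
      nlinarith [mul_le_mul_of_nonneg_left hh.le (norm_nonneg h), hK, norm_nonneg h]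
    simpa [Real.norm_eq_abs] using this
  have hdiff : Differentiable ℝ f := fun x => (hgrad x).hasFDerivAt.differentiableAt
  refine ⟨hdiff, ?_⟩
  have hgeq : ∀ x, gradient f x = P x := fun x => (hgrad x).gradient
  have cocoer : ∀ a b : EuclideanSpace ℝ (Fin N),
      1 / (2 * K) * ‖P b - P a‖ ^ 2 ≤ f a - f b - ⟪P b, a - b⟫ := by
    intro a b
    set d : EuclideanSpace ℝ (Fin N) := P b - P a with hd
    have h1 := hP b (a + K⁻¹ • d)
    have h2 := hQ a (K⁻¹ • d)
    have e0 : a + K⁻¹ • d - b = (a - b) + K⁻¹ • d := by abel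
    rw [e0, inner_add_right, real_inner_smul_right] at h1
    rw [real_inner_smul_right] at h2
    have e1 : ‖(K⁻¹ : ℝ) • d‖ ^ 2 = (K⁻¹) ^ 2 * ‖d‖ ^ 2 := by
      rw [norm_smul, mul_pow, Real.norm_eq_abs, sq_abs]
    rw [e1] at h2
    have e2 : ⟪P b, d⟫ - ⟪P a, d⟫ = ‖d‖ ^ 2 := by
      rw [← inner_sub_left, ← hd, real_inner_self_eq_norm_sq]
    have e3 : K / 2 * (K⁻¹ ^ 2 * ‖d‖ ^ 2) = 1 / (2 * K) * ‖d‖ ^ 2 := by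
      field_simp
    have e4 : K⁻¹ * ⟪P b, d⟫ - K⁻¹ * ⟪P a, d⟫ = K⁻¹ * ‖d‖ ^ 2 := by
      rw [← mul_sub, e2]
    have e5 : K⁻¹ * ‖d‖ ^ 2 - 1 / (2 * K) * ‖d‖ ^ 2 = 1 / (2 * K) * ‖d‖ ^ 2 := by
      field_simp; ring
    linarith
  apply LipschitzWith.of_dist_le_mul
  intro x y
  rw [dist_eq_norm, dist_eq_norm, hgeq, hgeq, Real.coe_toNNReal K hK.le]
  have c1 := cocoer x y
  have c2 := cocoer y x
  rw [norm_sub_rev (P x) (P y)] at c2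
  have e6 : ⟪P y, x - y⟫ + ⟪P x, y - x⟫ = -⟪P y - P x, y - x⟫ := by
    have : (x - y : EuclideanSpace ℝ (Fin N)) = -(y - x) := by abel
    rw [this, inner_neg_right, inner_sub_left]; ring
  have cs := real_inner_le_norm (P y - P x) (y - x)
  have hnn : (0:ℝ) ≤ ‖P y - P x‖ := norm_nonneg _
  rcases eq_or_lt_of_le hnn with h0 | h0
  · rw [norm_sub_rev, ← h0]
    positivity
  · rw [norm_sub_rev (P x) (P y)]
    have e7 : 1 / (2 * K) * ‖P y - P x‖ ^ 2 + 1 / (2 * K) * ‖P y - P x‖ ^ 2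
        = 1 / K * ‖P y - P x‖ ^ 2 := by field_simp; ring
    have key : 1 / K * ‖P y - P x‖ ^ 2 ≤ ‖P y - P x‖ * ‖y - x‖ := by
      linarith
    rw [norm_sub_rev y x] at key
    have e8 : K * (1 / K * ‖P y - P x‖ ^ 2) = ‖P y - P x‖ ^ 2 := by field_simp
    nlinarith [mul_le_mul_of_nonneg_left key hK.le, e8, h0]
end

section
/- Let N, D ≥ 1, ρ > 0, μ ∈ ℝ^N, σ ∈ ℝ^{N×D}, x₀ ∈ ℝ^N and ε > 0. Define, for G₀ > 0, ψ(x) = G₀(‖x − x₀‖² − ε²), and define the operator Lψ(x) = (1/2) ∑_{i,j=1}^N (σσ^T)_{ij} ∂²_{x^i x^j} ψ(x) + ∑_{i=1}^N μ_i ∂_{x^i} ψ(x). Then there exists G₀ > 0 such that: (i) ρ ψ(x) − Lψ(x) + 1 ≥ 0 for all x in the closed ball of radius ε around x₀; (ii) |∂_{x^i} ψ(x)| ≤ 1 for all such x and every i = 1,…,N; and (iii) ψ(x) = 0 for every x on the sphere ‖x − x₀‖ = ε. -/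
/-!
The partial derivatives of `ψ = G₀(‖x − x₀‖² − ε²)` are `∂ᵢψ = 2G₀(xᵢ − x₀ᵢ)` and
`∂ᵢ∂ⱼψ = 2G₀δᵢⱼ`, so `Lψ = G₀ tr(σσᵀ) + 2G₀ ⟨μ, x − x₀⟩`. On the ball `|xᵢ − x₀ᵢ| ≤ ε`, hence
`ρψ − Lψ` and `∂ᵢψ` are bounded by `G₀` times constants depending only on the data, and
`G₀ = (ρε² + tr(σσᵀ) + 2ε∑|μᵢ| + 2ε + 1)⁻¹` makes both bounds work.
-/

noncomputable def pd {N : ℕ} (f : (Fin N → ℝ) → ℝ) (i : Fin N) (x : Fin N → ℝ) : ℝ :=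
  deriv (fun t => f (Function.update x i t)) (x i)

section PartialDerivative

variable {N : ℕ}

theorem pd_const_mul (c : ℝ) (f : (Fin N → ℝ) → ℝ) (i : Fin N) (x : Fin N → ℝ) :
    pd (fun y => c * f y) i x = c * pd f i x := by
  simp only [pd, deriv_const_mul_field']

theorem pd_sub_const (f : (Fin N → ℝ) → ℝ) (r : ℝ) (i : Fin N) (x : Fin N → ℝ) :
    pd (fun y => f y - r) i x = pd f i x :=
  deriv_sub_const r

theorem pd_apply_comp (g : ℝ → ℝ) (i j : Fin N) (x : Fin N → ℝ) :
    pd (fun y => g (y j)) i x = if i = j then deriv g (x i) else 0 := by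
  unfold pd
  split_ifs with hij
  · subst hij
    simp only [Function.update_self]
  · simp only [Function.update_of_ne (Ne.symm hij), deriv_const]

theorem pd_sum_apply (g : Fin N → ℝ → ℝ) (i : Fin N) (x : Fin N → ℝ) :
    pd (fun y => ∑ j, g j (y j)) i x = deriv (g i) (x i) := by
  unfold pd
  simp only [Function.apply_update g, Finset.sum_update_of_mem (Finset.mem_univ i)]
  exact deriv_add_const _

end PartialDerivative

section Barrier

variable {N : ℕ} (c r : ℝ) (x₀ : Fin N → ℝ)

theorem pd_barrier (i : Fin N) :
    pd (fun x => c * ((∑ j, (x j - x₀ j) ^ 2) - r)) i = fun x => 2 * c * (x i - x₀ i) := by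
  ext x
  rw [pd_const_mul, pd_sub_const, pd_sum_apply (fun j t => (t - x₀ j) ^ 2),
    (((hasDerivAt_id' (x i)).sub_const (x₀ i)).fun_pow 2).deriv]
  ring

theorem pd_pd_barrier (i j : Fin N) (x : Fin N → ℝ) :
    pd (pd (fun x => c * ((∑ k, (x k - x₀ k) ^ 2) - r)) j) i x = if i = j then 2 * c else 0 := by
  rw [pd_barrier, pd_apply_comp (fun t => 2 * c * (t - x₀ j))]
  simp

theorem generator_barrier {D : ℕ} (μ : Fin N → ℝ) (σ : Fin N → Fin D → ℝ) (x : Fin N → ℝ) :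
    (1/2) * (∑ i, ∑ j, (∑ d, σ i d * σ j d) *
        pd (pd (fun x => c * ((∑ k, (x k - x₀ k) ^ 2) - r)) j) i x)
      + ∑ i, μ i * pd (fun x => c * ((∑ k, (x k - x₀ k) ^ 2) - r)) i x
      = c * ∑ i, ∑ d, σ i d ^ 2 + 2 * c * ∑ i, μ i * (x i - x₀ i) := by
  have hsecond : ∀ i, ∑ j, (∑ d, σ i d * σ j d) *
      pd (pd (fun x => c * ((∑ k, (x k - x₀ k) ^ 2) - r)) j) i x = 2 * c * ∑ d, σ i d ^ 2 := by
    intro i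
    simp only [pd_pd_barrier, mul_ite, mul_zero, Finset.sum_ite_eq, Finset.mem_univ, if_true]
    simp only [sq]
    ring
  have hfirst : ∑ i, μ i * pd (fun x => c * ((∑ k, (x k - x₀ k) ^ 2) - r)) i x
      = 2 * c * ∑ i, μ i * (x i - x₀ i) := by
    simp only [pd_barrier, Finset.mul_sum]
    exact Finset.sum_congr rfl fun i _ => by ring
  rw [hfirst, Finset.sum_congr rfl fun i _ => hsecond i, ← Finset.mul_sum]
  ring

end Barrier

theorem abs_le_of_sum_sq_le {ι : Type*} [Fintype ι] {v : ι → ℝ} {ε : ℝ} (hε : 0 ≤ ε)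
    (h : ∑ i, v i ^ 2 ≤ ε ^ 2) (i : ι) : |v i| ≤ ε :=
  abs_le_of_sq_le_sq ((Finset.single_le_sum (fun j _ => sq_nonneg (v j))
    (Finset.mem_univ i)).trans h) hε

theorem abs_sum_mul_le_of_abs_le {ι : Type*} [Fintype ι] (μ : ι → ℝ) {v : ι → ℝ} {ε : ℝ}
    (hv : ∀ i, |v i| ≤ ε) : |∑ i, μ i * v i| ≤ (∑ i, |μ i|) * ε :=
  calc |∑ i, μ i * v i| ≤ ∑ i, |μ i * v i| := Finset.abs_sum_le_sum_abs _ _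
    _ ≤ ∑ i, |μ i| * ε := Finset.sum_le_sum fun i _ =>
        (abs_mul _ _).trans_le (mul_le_mul_of_nonneg_left (hv i) (abs_nonneg _))
    _ = (∑ i, |μ i|) * ε := (Finset.sum_mul _ _ _).symm

theorem barrier_function_exists_general
    {N D : ℕ} (ρ : ℝ) (hρ : 0 < ρ)
    (μ : Fin N → ℝ) (σ : Fin N → Fin D → ℝ) (x₀ : Fin N → ℝ) (ε : ℝ) (hε : 0 < ε) :
    ∃ G₀ : ℝ, 0 < G₀ ∧
      (let ψ : (Fin N → ℝ) → ℝ := fun x => G₀ * ((∑ i, (x i - x₀ i) ^ 2) - ε ^ 2);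
       let Lψ : (Fin N → ℝ) → ℝ := fun x =>
         (1/2) * (∑ i, ∑ j, (∑ d, σ i d * σ j d) * pd (pd ψ j) i x)
           + ∑ i, μ i * pd ψ i x;
       (∀ x : Fin N → ℝ, (∑ i, (x i - x₀ i) ^ 2) ≤ ε ^ 2 →
          0 ≤ ρ * ψ x - Lψ x + 1) ∧
       (∀ x : Fin N → ℝ, (∑ i, (x i - x₀ i) ^ 2) ≤ ε ^ 2 →
          ∀ i, |pd ψ i x| ≤ 1) ∧
       (∀ x : Fin N → ℝ, (∑ i, (x i - x₀ i) ^ 2) = ε ^ 2 → ψ x = 0)) := by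
  set M := ∑ i, |μ i|
  set A := ρ * ε ^ 2 + ∑ i, ∑ d, σ i d ^ 2 + 2 * M * ε with hA
  set G := (A + 2 * ε + 1)⁻¹
  have hG : 0 < G := by positivity
  have hGA : 0 ≤ G * A := by positivity
  have hGε : 0 ≤ G * ε := by positivity
  have hbudget : G * A + 2 * (G * ε) ≤ 1 := by
    rw [← mul_left_comm, ← mul_add, inv_mul_le_one₀ (by positivity)]; linarith
  refine ⟨G, hG, ?_⟩
  intro ψ Lψ
  refine ⟨fun x hx => ?_, fun x hx i => ?_, fun x hx => by simp only [ψ, hx, sub_self, mul_zero]⟩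
  · have hdrift := mul_le_mul_of_nonneg_left (abs_le.1 <| abs_sum_mul_le_of_abs_le μ
      (abs_le_of_sum_sq_le hε.le hx)).2 hG.le
    have hdist : 0 ≤ ρ * G * ∑ i, (x i - x₀ i) ^ 2 := by positivity
    simp only [ψ, Lψ, generator_barrier]
    linarith [show G * A = G * (ρ * ε ^ 2) + G * ∑ i, ∑ d, σ i d ^ 2 + 2 * G * M * ε by
      rw [hA]; ring]
  · have hcoord := mul_le_mul_of_nonneg_left (abs_le_of_sum_sq_le hε.le hx i) hG.le
    simp only [ψ, pd_barrier, abs_mul, abs_two, abs_of_pos hG]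
    linarith

/-- Existence of the barrier function `ψ(x) = G₀(‖x−x₀‖² − ε²)` used in the viscosity
super-solution proof: for a suitable `G₀ > 0`, `ρψ − Lψ + 1 ≥ 0` and `|∂_{x^i}ψ| ≤ 1` on the
closed Euclidean ball of radius `ε` around `x₀`, and `ψ = 0` on its boundary sphere. -/
theorem barrier_function_exists
    {N D : ℕ} (hN : 1 ≤ N) (hD : 1 ≤ D) (ρ : ℝ) (hρ : 0 < ρ)
    (μ : Fin N → ℝ) (σ : Fin N → Fin D → ℝ) (x₀ : Fin N → ℝ) (ε : ℝ) (hε : 0 < ε) :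
    ∃ G₀ : ℝ, 0 < G₀ ∧
      (let ψ : (Fin N → ℝ) → ℝ := fun x => G₀ * ((∑ i, (x i - x₀ i) ^ 2) - ε ^ 2);
       let Lψ : (Fin N → ℝ) → ℝ := fun x =>
         (1/2) * (∑ i, ∑ j, (∑ d, σ i d * σ j d) * pd (pd ψ j) i x)
           + ∑ i, μ i * pd ψ i x;
       (∀ x : Fin N → ℝ, (∑ i, (x i - x₀ i) ^ 2) ≤ ε ^ 2 →
          0 ≤ ρ * ψ x - Lψ x + 1) ∧
       (∀ x : Fin N → ℝ, (∑ i, (x i - x₀ i) ^ 2) ≤ ε ^ 2 →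
          ∀ i, |pd ψ i x| ≤ 1) ∧
       (∀ x : Fin N → ℝ, (∑ i, (x i - x₀ i) ^ 2) = ε ^ 2 → ψ x = 0)) :=
  barrier_function_exists_general ρ hρ μ σ x₀ ε hε
end

section
/- Let K > 0 and let p : ℝ → ℝ be three times differentiable with p''(x) > 0 for all x and p'''(x) ≤ 0 for all x ≥ 0. Let c₀ > 0 satisfy p'(c₀) = K/2, and define g₁(x) = (p'(x) − K/2)/p''(x). Then g₁'(x) ≥ 1 for every x > c₀. -/
/-- The slope bound `g₁' ≥ 1` beyond the zero `c₀` of `p' − K/2`, where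
`g₁ = (p' − K/2)/p''`, for `p` with `p'' > 0` everywhere and `p''' ≤ 0` on `[0, ∞)`. -/
theorem g1_deriv_ge_one_beyond_c0
    (K : ℝ) (hK : 0 < K) (p : ℝ → ℝ)
    (hd1 : Differentiable ℝ p) (hd2 : Differentiable ℝ (deriv p))
    (hd3 : Differentiable ℝ (deriv (deriv p)))
    (hpp : ∀ x, 0 < deriv (deriv p) x)
    (hppp : ∀ x ≥ (0:ℝ), deriv (deriv (deriv p)) x ≤ 0)
    (c₀ : ℝ) (hc₀ : 0 < c₀) (hzero : deriv p c₀ = K / 2) :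
    ∀ x > c₀, 1 ≤ deriv (fun y => (deriv p y - K / 2) / deriv (deriv p) y) x := by
  intro x hx
  have hmono : StrictMono (deriv p) := strictMono_of_deriv_pos hpp
  have hgt : K / 2 < deriv p x := by
    have := hmono hx
    rwa [hzero] at this
  have hB : 0 < deriv (deriv p) x := hpp x
  have hD : deriv (deriv (deriv p)) x ≤ 0 := hppp x (le_of_lt (hc₀.trans hx))
  have hnum : ∀ y, HasDerivAt (fun y => deriv p y - K / 2) (deriv (deriv p) y) y := by
    intro y
    exact ((hd2 y).hasDerivAt).sub_const _
  have hquot : HasDerivAt (fun y => (deriv p y - K / 2) / deriv (deriv p) y)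
      ((deriv (deriv p) x * deriv (deriv p) x -
        (deriv p x - K / 2) * deriv (deriv (deriv p)) x) / (deriv (deriv p) x) ^ 2) x :=
    (hnum x).div ((hd3 x).hasDerivAt) (ne_of_gt hB)
  rw [hquot.deriv]
  rw [le_div_iff₀ (by positivity)]
  have h1 : (deriv p x - K / 2) * deriv (deriv (deriv p)) x ≤ 0 :=
    mul_nonpos_of_nonneg_of_nonpos (by linarith) hD
  nlinarith [sq_nonneg (deriv (deriv p) x)]
end

section
/- Let ρ > 0, σ > 0, K > 0, and let p : ℝ → ℝ be even and three times differentiable with c' ≤ p''(x) ≤ C' for all x (for some constants 0 < c' ≤ C') and p'''(x) ≤ 0 for all x ≥ 0. Define g(x) = (σ/√(2ρ)) tanh(√(2ρ) x / σ) and g₁(x) = (p'(x) − K/2)/p''(x). Then the equation g(x) = g₁(x) has exactly one solution on (0, ∞), and this solution is strictly larger than the unique positive zero c₀ of p' − K/2. -/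
/-!
Write `F = g - g₁`. For `0 < x ≤ c₀` we have `p'(x) ≤ K/2`, hence `g₁(x) ≤ 0 < g(x)`, so every
positive solution lies beyond `c₀`. On `[c₀, ∞)` the slopes separate: `g' = sech²(√(2ρ)x/σ) < 1`,
whereas `g₁' = 1 - (p' - K/2) p''' / p''² ≥ 1` since `p' ≥ K/2` and `p''' ≤ 0` there. Thus `F` is
strictly decreasing on `[c₀, ∞)`; it is positive at `c₀`, and negative at `c₀ + σ/√(2ρ)` because
`g < σ/√(2ρ)` while `g₁(x) ≥ x - c₀`. The intermediate value theorem gives the unique root.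
-/

open Set

namespace Real

theorem hasDerivAt_tanh (x : ℝ) : HasDerivAt tanh (1 / cosh x ^ 2) x := by
  have h := (hasDerivAt_sinh x).div (hasDerivAt_cosh x) (cosh_pos x).ne'
  rw [show sinh / cosh = tanh from funext fun y => (tanh_eq_sinh_div_cosh y).symm] at h
  refine h.congr_deriv ?_
  rw [← cosh_sq_sub_sinh_sq x]
  ring

theorem tanh_pos {x : ℝ} (hx : 0 < x) : 0 < tanh x := by
  rw [tanh_eq_sinh_div_cosh]
  exact div_pos (sinh_pos_iff.mpr hx) (cosh_pos x)

theorem hasDerivAt_mul_tanh_mul (a b x : ℝ) :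
    HasDerivAt (fun x => a * tanh (b * x)) (a * b / cosh (b * x) ^ 2) x := by
  refine (((hasDerivAt_tanh (b * x)).comp x ((hasDerivAt_id' x).const_mul b)).const_mul a
    ).congr_deriv ?_
  ring

theorem strictAntiOn_mul_tanh_mul_sub_id {a b : ℝ} (hab : a * b = 1) :
    StrictAntiOn (fun x => a * tanh (b * x) - x) (Ici 0) := by
  have hderiv (x : ℝ) : HasDerivAt (fun x => a * tanh (b * x) - x) (1 / cosh (b * x) ^ 2 - 1) x :=
    ((hasDerivAt_mul_tanh_mul a b x).sub (hasDerivAt_id' x)).congr_deriv (by rw [hab])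
  refine strictAntiOn_of_deriv_neg (convex_Ici 0)
    (fun x _ => (hderiv x).continuousAt.continuousWithinAt) fun x hx => ?_
  rw [interior_Ici, mem_Ioi] at hx
  have hcosh : 1 < cosh (b * x) :=
    one_lt_cosh.mpr (mul_ne_zero (right_ne_zero_of_mul_eq_one hab) hx.ne')
  rw [(hderiv x).deriv, sub_neg, div_lt_one (by positivity)]
  exact one_lt_pow₀ hcosh two_ne_zero

end Real

theorem StrictAntiOn.existsUnique_gt_eq_zero {F : ℝ → ℝ} {c M : ℝ}
    (hanti : StrictAntiOn F (Ici c)) (hcont : ContinuousOn F (Ici c)) (hcM : c ≤ M)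
    (hc : 0 < F c) (hM : F M < 0) : ∃! x, c < x ∧ F x = 0 := by
  obtain ⟨x, hx, hFx⟩ :=
    intermediate_value_Ioo' hcM (hcont.mono Icc_subset_Ici_self) (mem_Ioo.mpr ⟨hM, hc⟩)
  exact ⟨x, ⟨hx.1, hFx⟩, fun y hy =>
    hanti.injOn (mem_Ici.mpr (le_of_lt hy.1)) (mem_Ici.mpr (le_of_lt hx.1)) (hy.2.trans hFx.symm)⟩

section SlopeRatio

variable {f : ℝ → ℝ} {k c : ℝ}

theorem hasDerivAt_sub_div_deriv {x : ℝ} (hf' : DifferentiableAt ℝ (deriv f) x)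
    (hf0 : deriv f x ≠ 0) :
    HasDerivAt (fun y => (f y - k) / deriv f y)
      (1 - (f x - k) * deriv (deriv f) x / deriv f x ^ 2) x := by
  refine (((differentiableAt_of_deriv_ne_zero hf0).hasDerivAt.sub_const k).div
    hf'.hasDerivAt hf0).congr_deriv ?_
  field_simp

theorem monotoneOn_sub_div_deriv_sub_id (hf' : Differentiable ℝ (deriv f))
    (hpos : ∀ x, 0 < deriv f x) (hconc : ∀ x ∈ Ici c, deriv (deriv f) x ≤ 0) (hk : k ≤ f c) :
    MonotoneOn (fun x => (f x - k) / deriv f x - x) (Ici c) := by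
  have hderiv (x : ℝ) : HasDerivAt (fun x => (f x - k) / deriv f x - x)
      (-((f x - k) * deriv (deriv f) x / deriv f x ^ 2)) x := by
    refine ((hasDerivAt_sub_div_deriv (hf' x) (hpos x).ne').sub (hasDerivAt_id' x)).congr_deriv ?_
    ring
  refine monotoneOn_of_deriv_nonneg (convex_Ici c)
    (fun x _ => (hderiv x).continuousAt.continuousWithinAt)
    (fun x _ => (hderiv x).differentiableAt.differentiableWithinAt) fun x hx => ?_
  rw [interior_Ici, mem_Ioi] at hx
  have hkx : k ≤ f x := hk.trans ((strictMono_of_deriv_pos hpos).monotone (le_of_lt hx))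
  rw [(hderiv x).deriv, neg_nonneg]
  exact div_nonpos_of_nonpos_of_nonneg
    (mul_nonpos_of_nonneg_of_nonpos (sub_nonneg.mpr hkx) (hconc x (le_of_lt hx))) (sq_nonneg _)

theorem lt_of_sub_div_deriv_pos {x : ℝ} (hpos : ∀ x, 0 < deriv f x) (hfc : f c = k)
    (hx : 0 < (f x - k) / deriv f x) : c < x := by
  by_contra! hle
  have hfx : f x ≤ k := hfc ▸ (strictMono_of_deriv_pos hpos).monotone hle
  exact hx.not_ge (div_nonpos_of_nonpos_of_nonneg (sub_nonpos.mpr hfx) (hpos x).le)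

theorem existsUnique_gt_eq_sub_div_deriv {G : ℝ → ℝ} {B : ℝ} (hG : Continuous G)
    (hG_sub : StrictAntiOn (fun x => G x - x) (Ici c)) (hGc : 0 < G c) (hGB : ∀ x, G x < B)
    (hf' : Differentiable ℝ (deriv f)) (hpos : ∀ x, 0 < deriv f x)
    (hconc : ∀ x ∈ Ici c, deriv (deriv f) x ≤ 0) (hfc : f c = k) :
    ∃! x, c < x ∧ G x = (f x - k) / deriv f x := by
  have hr_sub := monotoneOn_sub_div_deriv_sub_id hf' hpos hconc hfc.ge
  have hanti : StrictAntiOn (fun x => G x - (f x - k) / deriv f x) (Ici c) :=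
    fun x hx y hy hxy => by
      have := hG_sub hx hy hxy
      have := hr_sub hx hy hxy.le
      dsimp only at *
      linarith
  have hcont : ContinuousOn (fun x => G x - (f x - k) / deriv f x) (Ici c) :=
    hG.continuousOn.sub fun x _ =>
      (hasDerivAt_sub_div_deriv (hf' x) (hpos x).ne').continuousAt.continuousWithinAt
  have hc : 0 < G c - (f c - k) / deriv f c := by simpa [hfc] using hGc
  have hcB : c ≤ c + B := by linarith [hGB c]
  have hM : G (c + B) - (f (c + B) - k) / deriv f (c + B) < 0 := by
    have := hr_sub self_mem_Ici hcB hcB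
    dsimp only at this
    rw [hfc, sub_self, zero_div] at this
    linarith [hGB (c + B)]
  simpa only [sub_eq_zero] using
    hanti.existsUnique_gt_eq_zero hcont hcB hc hM

end SlopeRatio

theorem free_boundary_threshold_exists_unique_general
    (ρ σ K : ℝ) (hρ : 0 < ρ) (hσ : 0 < σ)
    (p : ℝ → ℝ)
    (hd3 : Differentiable ℝ (deriv (deriv p)))
    (c' C' : ℝ) (hc' : 0 < c')
    (hpp : ∀ x, c' ≤ deriv (deriv p) x ∧ deriv (deriv p) x ≤ C')
    (hppp : ∀ x ≥ (0:ℝ), deriv (deriv (deriv p)) x ≤ 0)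
    (g g₁ : ℝ → ℝ)
    (hg : ∀ x, g x = σ / Real.sqrt (2 * ρ) * Real.tanh (Real.sqrt (2 * ρ) * x / σ))
    (hg₁ : ∀ x, g₁ x = (deriv p x - K / 2) / deriv (deriv p) x)
    (c₀ : ℝ) (hc₀pos : 0 < c₀) (hc₀ : deriv p c₀ = K / 2) :
    (∃! x : ℝ, 0 < x ∧ g x = g₁ x) ∧
    (∀ x : ℝ, 0 < x → g x = g₁ x → c₀ < x) := by
  obtain ⟨a, b, ha, hb, hab, hgab⟩ :
      ∃ a b, 0 < a ∧ 0 < b ∧ a * b = 1 ∧ ∀ x, g x = a * Real.tanh (b * x) := by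
    have hs : 0 < Real.sqrt (2 * ρ) := by positivity
    refine ⟨σ / Real.sqrt (2 * ρ), Real.sqrt (2 * ρ) / σ, by positivity, by positivity,
      by field_simp, fun x => by rw [hg, div_mul_eq_mul_div (Real.sqrt (2 * ρ)) σ x]⟩
  obtain rfl : g = fun x => a * Real.tanh (b * x) := funext hgab
  obtain rfl : g₁ = fun x => (deriv p x - K / 2) / deriv (deriv p) x := funext hg₁
  beta_reduce
  have hpos (x : ℝ) : 0 < deriv (deriv p) x := hc'.trans_le (hpp x).1
  have hg_pos (x : ℝ) (hx : 0 < x) : 0 < a * Real.tanh (b * x) :=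
    mul_pos ha (Real.tanh_pos (by positivity))
  have hsol_gt (x : ℝ) (hx : 0 < x)
      (hsol : a * Real.tanh (b * x) = (deriv p x - K / 2) / deriv (deriv p) x) : c₀ < x :=
    lt_of_sub_div_deriv_pos hpos hc₀ (hsol ▸ hg_pos x hx)
  obtain ⟨x, ⟨hx, hsol⟩, huniq⟩ := existsUnique_gt_eq_sub_div_deriv
    (continuous_iff_continuousAt.mpr fun x => (Real.hasDerivAt_mul_tanh_mul a b x).continuousAt)
    ((Real.strictAntiOn_mul_tanh_mul_sub_id hab).mono (Ici_subset_Ici.mpr hc₀pos.le))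
    (hg_pos c₀ hc₀pos) (fun x => mul_lt_of_lt_one_right ha (Real.tanh_lt_one (b * x)))
    hd3 hpos (fun x hx => hppp x (hc₀pos.le.trans hx)) hc₀
  exact ⟨⟨x, ⟨hc₀pos.trans hx, hsol⟩, fun y hy => huniq y ⟨hsol_gt y hy.1 hy.2, hy.2⟩⟩, hsol_gt⟩

/-- Existence and uniqueness of the free-boundary threshold: the equation
`(σ/√(2ρ)) tanh(√(2ρ)x/σ) = (p'(x) − K/2)/p''(x)` has exactly one solution on `(0, ∞)`,
and this solution lies strictly beyond the unique positive zero `c₀` of `p' − K/2`. -/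
theorem free_boundary_threshold_exists_unique
    (ρ σ K : ℝ) (hρ : 0 < ρ) (hσ : 0 < σ) (hK : 0 < K)
    (p : ℝ → ℝ) (heven : ∀ x, p (-x) = p x)
    (hd1 : Differentiable ℝ p) (hd2 : Differentiable ℝ (deriv p))
    (hd3 : Differentiable ℝ (deriv (deriv p)))
    (c' C' : ℝ) (hc' : 0 < c') (hc'C' : c' ≤ C')
    (hpp : ∀ x, c' ≤ deriv (deriv p) x ∧ deriv (deriv p) x ≤ C')
    (hppp : ∀ x ≥ (0:ℝ), deriv (deriv (deriv p)) x ≤ 0)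
    (g g₁ : ℝ → ℝ)
    (hg : ∀ x, g x = σ / Real.sqrt (2 * ρ) * Real.tanh (Real.sqrt (2 * ρ) * x / σ))
    (hg₁ : ∀ x, g₁ x = (deriv p x - K / 2) / deriv (deriv p) x)
    (c₀ : ℝ) (hc₀pos : 0 < c₀) (hc₀ : deriv p c₀ = K / 2)
    (hc₀uniq : ∀ y : ℝ, 0 < y → deriv p y = K / 2 → y = c₀) :
    (∃! x : ℝ, 0 < x ∧ g x = g₁ x) ∧
    (∀ x : ℝ, 0 < x → g x = g₁ x → c₀ < x) :=
  free_boundary_threshold_exists_unique_general ρ σ K hρ hσ p hd3 c' C' hc' hpp hppp g g₁ hg hg₁ c₀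
    hc₀pos hc₀
end

section
/- Let ρ > 0, σ > 0, K > 0, and let p : ℝ → ℝ be even and three times differentiable with c' ≤ p''(x) ≤ C' for all x (for some constants 0 < c' ≤ C') and p'''(x) ≤ 0 for all x ≥ 0. Define g(x) = (σ/√(2ρ)) tanh(√(2ρ) x / σ), g₁(x) = (p'(x) − K/2)/p''(x) and g₂(x) = (p'(x) − K)/p''(x). Let c₁ be the unique solution of g(x) = g₁(x) on (0, ∞) and c₂ the unique solution of g(x) = g₂(x) on (0, ∞). Then c₂ > c₁. -/
/-- Comparison of the Pareto-optimal threshold `c₁` (solution of `g = g₁` with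
`g₁ = (p' − K/2)/p''`) and the Nash threshold `c₂` (solution of `g = g₂` with
`g₂ = (p' − K)/p''`): the Nash threshold is strictly larger, `c₂ > c₁`. -/
theorem nash_threshold_gt_pareto_threshold
    (ρ σ K : ℝ) (hρ : 0 < ρ) (hσ : 0 < σ) (hK : 0 < K)
    (p : ℝ → ℝ) (heven : ∀ x, p (-x) = p x)
    (hd1 : Differentiable ℝ p) (hd2 : Differentiable ℝ (deriv p))
    (hd3 : Differentiable ℝ (deriv (deriv p)))
    (c' C' : ℝ) (hc' : 0 < c') (hc'C' : c' ≤ C')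
    (hpp : ∀ x, c' ≤ deriv (deriv p) x ∧ deriv (deriv p) x ≤ C')
    (hppp : ∀ x ≥ (0:ℝ), deriv (deriv (deriv p)) x ≤ 0)
    (g g₁ g₂ : ℝ → ℝ)
    (hg : ∀ x, g x = σ / Real.sqrt (2 * ρ) * Real.tanh (Real.sqrt (2 * ρ) * x / σ))
    (hg₁ : ∀ x, g₁ x = (deriv p x - K / 2) / deriv (deriv p) x)
    (hg₂ : ∀ x, g₂ x = (deriv p x - K) / deriv (deriv p) x)
    (c₁ c₂ : ℝ)
    (hc₁pos : 0 < c₁) (hc₁ : g c₁ = g₁ c₁)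
    (hc₁uniq : ∀ y : ℝ, 0 < y → g y = g₁ y → y = c₁)
    (hc₂pos : 0 < c₂) (hc₂ : g c₂ = g₂ c₂)
    (hc₂uniq : ∀ y : ℝ, 0 < y → g y = g₂ y → y = c₂) :
    c₁ < c₂ := by
  -- second derivative is positive
  have hpp_pos : ∀ x, 0 < deriv (deriv p) x := fun x => lt_of_lt_of_le hc' (hpp x).1
  have hpp_ne : ∀ x, deriv (deriv p) x ≠ 0 := fun x => (hpp_pos x).ne'
  -- p' is odd, so p'(0) = 0
  have hodd : ∀ x, deriv p (-x) = - deriv p x := by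
    intro x
    have hpe : (fun y => p (-y)) = p := funext heven
    have h1 : deriv (fun y => p (-y)) x = -deriv p (-x) := by
      rw [deriv_comp_neg]
    rw [hpe] at h1
    linarith [h1]
  have hp'0 : deriv p 0 = 0 := by
    have := hodd 0
    simp at this
    linarith
  -- F = g - g₁
  set F : ℝ → ℝ := fun x => g x - g₁ x with hF
  have hgfun : g = fun x => σ / Real.sqrt (2 * ρ) * Real.tanh (Real.sqrt (2 * ρ) * x / σ) :=
    funext hg
  have hg₁fun : g₁ = fun x => (deriv p x - K / 2) / deriv (deriv p) x := funext hg₁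
  have hgc : Continuous g := by
    rw [hgfun]
    have htanh : Continuous Real.tanh := by
      have h : Real.tanh = fun x => Real.sinh x / Real.cosh x :=
        funext Real.tanh_eq_sinh_div_cosh
      rw [h]
      exact Real.continuous_sinh.div Real.continuous_cosh fun x => (Real.cosh_pos x).ne'
    exact continuous_const.mul (htanh.comp
      ((continuous_const.mul continuous_id).div_const σ))
  have hg₁c : Continuous g₁ := by
    rw [hg₁fun]
    exact ((hd2.continuous.sub continuous_const).div hd3.continuous hpp_ne)
  have hFc : Continuous F := hgc.sub hg₁c
  -- F 0 > 0
  have hF0 : 0 < F 0 := by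
    have : F 0 = 0 - (0 - K / 2) / deriv (deriv p) 0 := by
      simp only [hF, hg 0, hg₁ 0, hp'0]
      simp [Real.tanh_zero]
    rw [this]
    have := hpp_pos 0
    have hlt : (0 - K / 2) / deriv (deriv p) 0 < 0 := div_neg_of_neg_of_pos (by linarith) this
    linarith
  -- F c₂ < 0
  have hFc₂ : F c₂ < 0 := by
    have : F c₂ = (deriv p c₂ - K) / deriv (deriv p) c₂
        - (deriv p c₂ - K / 2) / deriv (deriv p) c₂ := by
      simp only [hF, ← hg₂ c₂, ← hg₁ c₂, hc₂]
    rw [this, div_sub_div_same]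
    exact div_neg_of_neg_of_pos (by linarith) (hpp_pos c₂)
  -- intermediate value theorem on [0, c₂]
  have hsub : Set.Ioo (F c₂) (F 0) ⊆ F '' Set.Ioo 0 c₂ :=
    intermediate_value_Ioo' hc₂pos.le hFc.continuousOn
  obtain ⟨y, hy, hFy⟩ := hsub ⟨hFc₂, hF0⟩
  have hy1 : y = c₁ := hc₁uniq y hy.1 (by simpa [hF, sub_eq_zero] using hFy)
  exact hy1 ▸ hy.2
end

section
/- Let ρ > 0, σ̃ > 0, and let h : ℝ → ℝ be twice continuously differentiable with c ≤ h''(y) ≤ C for all y ∈ ℝ, where 0 < c < C. Define p₁(x) = ∫_0^∞ e^{−ρt} ( ∫_ℝ h(x + y) dγ_{σ̃²t}(y) ) dt, where γ_v denotes the centered Gaussian measure on ℝ with variance v (and γ_0 is the Dirac mass at 0). Then the defining integral converges for every x ∈ ℝ, p₁ is twice differentiable on ℝ, and c/ρ ≤ p₁''(x) ≤ C/ρ for every x ∈ ℝ. -/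
open MeasureTheory ProbabilityTheory

/-! Since `e^{-ρt} dt` has finite mass and finite first moment on `(0, ∞)`, the mixture
`ν = ∫₀^∞ e^{-ρt} 𝒩(0, σ²t) dt` is a finite measure (of mass `1/ρ`) with a finite second moment,
and `p₁(x) = ∫ h(x + y) dν(y)`. A bound on `h''` gives `h`, `h'`, `h''` at most quadratic growth,
which is exactly what is needed to differentiate twice under `ν`; then
`p₁''(x) = ∫ h''(x + y) dν(y)` lies between `c ν(ℝ) = c/ρ` and `C ν(ℝ) = C/ρ`. -/

/-- `p₁(x) = ∫_0^∞ e^{−ρt} E[h(x + σ̃ B_t)] dt`, written with the centered Gaussian measure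
of variance `σ̃²t` (which is the Dirac mass at `0` when `t = 0`). -/
noncomputable def p1 (ρ σ : ℝ) (h : ℝ → ℝ) (x : ℝ) : ℝ :=
  ∫ t in Set.Ioi (0:ℝ), Real.exp (-ρ * t) *
    ∫ y, h (x + y) ∂(gaussianReal 0 (Real.toNNReal (σ ^ 2 * t)))

open Set Real

section MeasureComp

variable {α β E : Type*} [MeasurableSpace α] [MeasurableSpace β] [NormedAddCommGroup E]
  [NormedSpace ℝ E] {μ : Measure α} {κ : Kernel α β} {f : β → E}

lemma MeasureTheory.Measure.integral_comp (hf : Integrable f (κ ∘ₘ μ)) :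
    ∫ y, f y ∂(κ ∘ₘ μ) = ∫ x, ∫ y, f y ∂κ x ∂μ := by
  rw [Measure.comp_eq_comp_const_apply] at hf ⊢
  simpa using Kernel.integral_comp hf

lemma MeasureTheory.Integrable.integral_measure_comp (hf : Integrable f (κ ∘ₘ μ)) :
    Integrable (fun x ↦ ∫ y, f y ∂κ x) μ := by
  rw [Measure.comp_eq_comp_const_apply] at hf
  simpa using hf.integral_comp

end MeasureComp

lemma abs_sub_le_mul_abs_of_abs_deriv_le {f : ℝ → ℝ} (hf : Differentiable ℝ f) {L y : ℝ}
    (hL : ∀ w, |w| ≤ |y| → |deriv f w| ≤ L) : |f y - f 0| ≤ L * |y| := by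
  simpa using (convex_closedBall (0 : ℝ) |y|).norm_image_sub_le_of_norm_deriv_le
    (fun w _ ↦ hf w) (fun w hw ↦ hL w (by simpa using hw))
    (Metric.mem_closedBall_self (abs_nonneg y)) (by simp)

lemma exists_abs_le_mul_one_add_sq {f : ℝ → ℝ} (hf : Differentiable ℝ f)
    (hf' : Differentiable ℝ (deriv f)) {M : ℝ} (hM : ∀ y, |deriv (deriv f) y| ≤ M) :
    ∃ K, ∀ y, |f y| ≤ K * (1 + y ^ 2) ∧ |deriv f y| ≤ K * (1 + y ^ 2) ∧
      |deriv (deriv f) y| ≤ K * (1 + y ^ 2) := by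
  have hM0 : 0 ≤ M := (abs_nonneg _).trans (hM 0)
  have hd : ∀ y, |deriv f y| ≤ |deriv f 0| + M * |y| := fun y ↦ by
    have := abs_sub_le_mul_abs_of_abs_deriv_le hf' (y := y) fun w _ ↦ hM w
    linarith [abs_sub_abs_le_abs_sub (deriv f y) (deriv f 0)]
  have h0 : ∀ y, |f y| ≤ |f 0| + (|deriv f 0| + M * |y|) * |y| := fun y ↦ by
    have := abs_sub_le_mul_abs_of_abs_deriv_le hf fun w hw ↦
      (hd w).trans (by gcongr : |deriv f 0| + M * |w| ≤ |deriv f 0| + M * |y|)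
    linarith [abs_sub_abs_le_abs_sub (f y) (f 0)]
  refine ⟨|f 0| + |deriv f 0| + M, fun y ↦ ?_⟩
  have hy : |y| ≤ 1 + y ^ 2 := by nlinarith [sq_abs y, abs_nonneg y]
  have hy2 : |y| * |y| = y ^ 2 := by rw [← sq, sq_abs]
  refine ⟨(h0 y).trans ?_, (hd y).trans ?_, (hM y).trans ?_⟩ <;>
    nlinarith [abs_nonneg (f 0), abs_nonneg (deriv f 0), sq_nonneg y, abs_nonneg y]

section QuadraticGrowth

variable {ν : Measure ℝ} [IsFiniteMeasure ν] {f : ℝ → ℝ} {K : ℝ}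

lemma abs_comp_add_le (hK : ∀ y, |f y| ≤ K * (1 + y ^ 2)) (x y : ℝ) :
    |f (x + y)| ≤ K * (1 + 2 * x ^ 2) + 2 * K * y ^ 2 := by
  have hK0 : 0 ≤ K := by simpa using (abs_nonneg _).trans (hK 0)
  have := mul_le_mul_of_nonneg_left (by nlinarith [sq_nonneg (x - y)] :
    1 + (x + y) ^ 2 ≤ 1 + 2 * x ^ 2 + 2 * y ^ 2) hK0
  linarith [hK (x + y)]

lemma integrable_comp_add_of_abs_le (hν : Integrable (fun y ↦ y ^ 2) ν) (hf : Measurable f)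
    (hK : ∀ y, |f y| ≤ K * (1 + y ^ 2)) (x : ℝ) : Integrable (fun y ↦ f (x + y)) ν :=
  ((integrable_const _).add (hν.const_mul _)).mono'
    (hf.comp (measurable_const_add x)).aestronglyMeasurable
    (ae_of_all _ fun y ↦ abs_comp_add_le hK x y)

theorem hasDerivAt_integral_comp_add (hν : Integrable (fun y ↦ y ^ 2) ν) (hf : Differentiable ℝ f)
    (hf' : ∀ y, |deriv f y| ≤ K * (1 + y ^ 2)) {x : ℝ} (hfx : Integrable (fun y ↦ f (x + y)) ν) :
    HasDerivAt (fun x ↦ ∫ y, f (x + y) ∂ν) (∫ y, deriv f (x + y) ∂ν) x := by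
  have hK0 : 0 ≤ K := by simpa using (abs_nonneg _).trans (hf' 0)
  have hbound : ∀ y, ∀ x' ∈ Metric.ball x 1,
      ‖deriv f (x' + y)‖ ≤ K * (1 + 2 * (|x| + 1) ^ 2) + 2 * K * y ^ 2 := fun y x' hx' ↦ by
    rw [Metric.mem_ball, Real.dist_eq] at hx'
    have hx : |x'| ≤ |x| + 1 := by linarith [abs_sub_abs_le_abs_sub x' x]
    have : x' ^ 2 ≤ (|x| + 1) ^ 2 := by rw [← sq_abs]; gcongr
    refine (abs_comp_add_le hf' x' y).trans ?_
    gcongr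
  exact (hasDerivAt_integral_of_dominated_loc_of_deriv_le (F := fun x' y ↦ f (x' + y))
    (Metric.ball_mem_nhds x one_pos) (Filter.Eventually.of_forall fun x' ↦
      (hf.continuous.comp (continuous_const_add x')).aestronglyMeasurable)
    hfx ((measurable_deriv f).comp (measurable_const_add x)).aestronglyMeasurable
    (ae_of_all _ hbound) ((integrable_const _).add (hν.const_mul _))
    (ae_of_all _ fun y x' _ ↦ (hf (x' + y)).hasDerivAt.comp_add_const x' y)).2

end QuadraticGrowth

lemma integral_mem_Icc_of_forall_mem_Icc {α : Type*} [MeasurableSpace α] {μ : Measure α}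
    [IsFiniteMeasure μ] {g : α → ℝ} {a b : ℝ} (hg : Integrable g μ) (hab : ∀ x, g x ∈ Icc a b) :
    ∫ x, g x ∂μ ∈ Icc (a * μ.real univ) (b * μ.real univ) := by
  have := integral_mono (integrable_const a) hg fun x ↦ (hab x).1
  have := integral_mono hg (integrable_const b) fun x ↦ (hab x).2
  simp_all [mul_comm]

lemma integral_sq_gaussianReal (v : NNReal) : ∫ y, y ^ 2 ∂gaussianReal 0 v = v := by
  rw [← variance_fun_id_gaussianReal (μ := 0),
    variance_of_integral_eq_zero (by fun_prop) integral_id_gaussianReal]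

noncomputable def gaussianKernel (σ : ℝ) : Kernel ℝ ℝ where
  toFun t := gaussianReal 0 (σ ^ 2 * t).toNNReal
  measurable' := measurable_gaussianReal.comp (measurable_const.prodMk (by fun_prop))

lemma gaussianKernel_apply (σ t : ℝ) :
    gaussianKernel σ t = gaussianReal 0 (σ ^ 2 * t).toNNReal := rfl

instance (σ : ℝ) : IsMarkovKernel (gaussianKernel σ) :=
  ⟨fun t ↦ by rw [gaussianKernel_apply]; infer_instance⟩

noncomputable def discountMeasure (ρ : ℝ) : Measure ℝ :=
  (volume.restrict (Ioi 0)).withDensity fun t ↦ ENNReal.ofReal (exp (-ρ * t))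

lemma integral_discountMeasure (ρ : ℝ) (F : ℝ → ℝ) :
    ∫ t, F t ∂discountMeasure ρ = ∫ t in Ioi 0, exp (-ρ * t) * F t := by
  rw [discountMeasure, integral_withDensity_eq_integral_toReal_smul (by fun_prop)
    (ae_of_all _ fun _ ↦ ENNReal.ofReal_lt_top)]
  simp [ENNReal.toReal_ofReal (exp_pos _).le]

lemma integrable_discountMeasure_iff (ρ : ℝ) (F : ℝ → ℝ) :
    Integrable F (discountMeasure ρ) ↔ IntegrableOn (fun t ↦ exp (-ρ * t) * F t) (Ioi 0) := by
  rw [discountMeasure, integrable_withDensity_iff_integrable_smul' (by fun_prop)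
    (ae_of_all _ fun _ ↦ ENNReal.ofReal_lt_top)]
  simp [ENNReal.toReal_ofReal (exp_pos _).le, IntegrableOn]

lemma isFiniteMeasure_discountMeasure {ρ : ℝ} (hρ : 0 < ρ) :
    IsFiniteMeasure (discountMeasure ρ) :=
  isFiniteMeasure_withDensity_ofReal (exp_neg_integrableOn_Ioi 0 hρ).2

lemma discountMeasure_real_univ {ρ : ℝ} (hρ : 0 < ρ) : (discountMeasure ρ).real univ = 1 / ρ := by
  have := integral_discountMeasure ρ 1
  simp only [integral_const, Pi.one_apply, smul_eq_mul, mul_one] at this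
  rw [this, integral_exp_mul_Ioi (by linarith)]
  field_simp
  simp

lemma integrableOn_Ioi_mul_exp_neg_mul {ρ : ℝ} (hρ : 0 < ρ) :
    IntegrableOn (fun t ↦ t * exp (-ρ * t)) (Ioi 0) := by
  simpa using integrableOn_rpow_mul_exp_neg_mul_rpow (s := 1) (p := 1) (by norm_num) one_pos hρ

noncomputable def resolventMeasure (ρ σ : ℝ) : Measure ℝ := gaussianKernel σ ∘ₘ discountMeasure ρ

section Resolvent

variable {ρ σ : ℝ}

lemma isFiniteMeasure_resolventMeasure (hρ : 0 < ρ) : IsFiniteMeasure (resolventMeasure ρ σ) :=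
  have := isFiniteMeasure_discountMeasure hρ
  inferInstanceAs (IsFiniteMeasure (gaussianKernel σ ∘ₘ discountMeasure ρ))

lemma resolventMeasure_real_univ (hρ : 0 < ρ) : (resolventMeasure ρ σ).real univ = 1 / ρ := by
  rw [← discountMeasure_real_univ hρ, measureReal_def, measureReal_def, resolventMeasure,
    Measure.comp_apply_univ]

lemma integrable_sq_resolventMeasure (hρ : 0 < ρ) :
    Integrable (fun y ↦ y ^ 2) (resolventMeasure ρ σ) := by
  rw [resolventMeasure, Measure.integrable_comp_iff (by fun_prop)]
  refine ⟨ae_of_all _ fun t ↦ (memLp_id_gaussianReal 2).integrable_sq, ?_⟩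
  simp only [norm_pow, Real.norm_eq_abs, sq_abs, gaussianKernel_apply, integral_sq_gaussianReal]
  rw [integrable_discountMeasure_iff]
  refine IntegrableOn.congr_fun ((integrableOn_Ioi_mul_exp_neg_mul hρ).const_mul (σ ^ 2))
    (fun t ht ↦ ?_) measurableSet_Ioi
  rw [Real.coe_toNNReal _ (mul_nonneg (sq_nonneg σ) (le_of_lt ht))]
  ring

lemma integral_resolventMeasure {g : ℝ → ℝ} (hg : Integrable g (resolventMeasure ρ σ)) :
    ∫ y, g y ∂resolventMeasure ρ σ
      = ∫ t in Ioi 0, exp (-ρ * t) * ∫ y, g y ∂gaussianReal 0 (σ ^ 2 * t).toNNReal := by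
  rw [resolventMeasure, Measure.integral_comp hg, integral_discountMeasure]
  rfl

lemma integrableOn_of_integrable_resolventMeasure {g : ℝ → ℝ}
    (hg : Integrable g (resolventMeasure ρ σ)) :
    IntegrableOn (fun t ↦ exp (-ρ * t) * ∫ y, g y ∂gaussianReal 0 (σ ^ 2 * t).toNNReal) (Ioi 0) :=
  (integrable_discountMeasure_iff ρ _).1 hg.integral_measure_comp

end Resolvent

theorem p1_integrable_twice_differentiable_and_second_deriv_bounds_general
    (ρ σ : ℝ) (hρ : 0 < ρ)
    (h : ℝ → ℝ) (hh : ContDiff ℝ 2 h)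
    (c C : ℝ)
    (hbound : ∀ y : ℝ, c ≤ deriv (deriv h) y ∧ deriv (deriv h) y ≤ C) :
    (∀ x t : ℝ, Integrable (fun y => h (x + y))
        (gaussianReal 0 (Real.toNNReal (σ ^ 2 * t)))) ∧
    (∀ x : ℝ, IntegrableOn
        (fun t => Real.exp (-ρ * t) *
          ∫ y, h (x + y) ∂(gaussianReal 0 (Real.toNNReal (σ ^ 2 * t))))
        (Set.Ioi (0:ℝ))) ∧
    (Differentiable ℝ (p1 ρ σ h) ∧ Differentiable ℝ (deriv (p1 ρ σ h))) ∧
    (∀ x : ℝ, c / ρ ≤ deriv (deriv (p1 ρ σ h)) x ∧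
      deriv (deriv (p1 ρ σ h)) x ≤ C / ρ) := by
  have hd : Differentiable ℝ h := hh.differentiable (by norm_num)
  have hd' : Differentiable ℝ (deriv h) := by
    simpa using hh.differentiable_iteratedDeriv 1 (by norm_num)
  obtain ⟨K, hK⟩ := exists_abs_le_mul_one_add_sq hd hd' fun y ↦
    abs_le_max_abs_abs (hbound y).1 (hbound y).2
  set ν := resolventMeasure ρ σ
  have := isFiniteMeasure_resolventMeasure (σ := σ) hρ
  have hν : Integrable (fun y ↦ y ^ 2) ν := integrable_sq_resolventMeasure hρ
  have hint := integrable_comp_add_of_abs_le hν hd.continuous.measurable fun y ↦ (hK y).1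
  have hint' := integrable_comp_add_of_abs_le hν (measurable_deriv h) fun y ↦ (hK y).2.1
  have hint'' := integrable_comp_add_of_abs_le hν (measurable_deriv _) fun y ↦ (hK y).2.2
  have hp1 : p1 ρ σ h = fun x ↦ ∫ y, h (x + y) ∂ν :=
    funext fun x ↦ (integral_resolventMeasure (hint x)).symm
  have hD1 (x : ℝ) : HasDerivAt (p1 ρ σ h) (∫ y, deriv h (x + y) ∂ν) x :=
    hp1 ▸ hasDerivAt_integral_comp_add hν hd (fun y ↦ (hK y).2.1) (hint x)
  have hD2 (x : ℝ) : HasDerivAt (deriv (p1 ρ σ h)) (∫ y, deriv (deriv h) (x + y) ∂ν) x := by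
    rw [funext fun x ↦ (hD1 x).deriv]
    exact hasDerivAt_integral_comp_add hν hd' (fun y ↦ (hK y).2.2) (hint' x)
  refine ⟨fun x t ↦ integrable_comp_add_of_abs_le (memLp_id_gaussianReal 2).integrable_sq
      hd.continuous.measurable (fun y ↦ (hK y).1) x,
    fun x ↦ integrableOn_of_integrable_resolventMeasure (hint x),
    ⟨fun x ↦ (hD1 x).differentiableAt, fun x ↦ (hD2 x).differentiableAt⟩, fun x ↦ ?_⟩
  rw [(hD2 x).deriv, div_eq_mul_one_div c, div_eq_mul_one_div C,
    ← resolventMeasure_real_univ (σ := σ) hρ]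
  exact integral_mem_Icc_of_forall_mem_Icc (hint'' x) fun y ↦ hbound (x + y)

/-- Convergence of the defining integrals of `p₁`, twice differentiability of `p₁`, and the
bounds `c/ρ ≤ p₁'' ≤ C/ρ`, for `h ∈ C²` with `c ≤ h'' ≤ C`. -/
theorem p1_integrable_twice_differentiable_and_second_deriv_bounds
    (ρ σ : ℝ) (hρ : 0 < ρ) (hσ : 0 < σ)
    (h : ℝ → ℝ) (hh : ContDiff ℝ 2 h)
    (c C : ℝ) (hc : 0 < c) (hcC : c < C)
    (hbound : ∀ y : ℝ, c ≤ deriv (deriv h) y ∧ deriv (deriv h) y ≤ C) :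
    (∀ x t : ℝ, Integrable (fun y => h (x + y))
        (gaussianReal 0 (Real.toNNReal (σ ^ 2 * t)))) ∧
    (∀ x : ℝ, IntegrableOn
        (fun t => Real.exp (-ρ * t) *
          ∫ y, h (x + y) ∂(gaussianReal 0 (Real.toNNReal (σ ^ 2 * t))))
        (Set.Ioi (0:ℝ))) ∧
    (Differentiable ℝ (p1 ρ σ h) ∧ Differentiable ℝ (deriv (p1 ρ σ h))) ∧
    (∀ x : ℝ, c / ρ ≤ deriv (deriv (p1 ρ σ h)) x ∧
      deriv (deriv (p1 ρ σ h)) x ≤ C / ρ) :=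
  p1_integrable_twice_differentiable_and_second_deriv_bounds_general ρ σ hρ h hh c C hbound
end

section
/- Let ρ > 0, σ̃ > 0, and let h : ℝ → ℝ be twice continuously differentiable with bounded second derivative. Define p₁(x) = ∫_0^∞ e^{−ρt} ( ∫_ℝ h(x + y) dγ_{σ̃²t}(y) ) dt, where γ_v denotes the centered Gaussian measure on ℝ with variance v (and γ_0 is the Dirac mass at 0). Then p₁ is twice differentiable and satisfies the resolvent equation ρ p₁(x) − (σ̃²/2) p₁''(x) = h(x) for every x ∈ ℝ. -/
/-!
Write `p₁(x) = ∫₀^∞ e^{-ρt} G h x (σ√t) dt` with `G f x s = E f(x + sZ)` (`gaussianAverage`),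
`Z` standard normal. For `f` of polynomial growth, differentiating under the integral gives
`∂ₓ G f = G f'`, and Gaussian integration by parts (`E[Z g(Z)] = E[g'(Z)]`) gives
`∂ₛ G f = s G f''`. Hence
`d/dt (e^{-ρt} G h x (σ√t)) = e^{-ρt} ((σ²/2) G h'' x (σ√t) - ρ G h x (σ√t))`; integrating over
`(0, ∞)`, the boundary term at `0` is `G h x 0 = h x` and the one at `∞` vanishes because the
integrand and its derivative are integrable. Since also `p₁'' = ∫₀^∞ e^{-ρt} G h'' x (σ√t) dt`,
this is `ρ p₁ - (σ²/2) p₁'' = h`.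
-/

open MeasureTheory ProbabilityTheory

open Real Filter Set
open scoped NNReal

namespace ProbabilityTheory

variable {μ : ℝ} {v : ℝ≥0}

lemma integrable_gaussianReal_iff (hv : v ≠ 0) {f : ℝ → ℝ} :
    Integrable f (gaussianReal μ v) ↔ Integrable (fun y => gaussianPDFReal μ v y * f y) := by
  rw [gaussianReal_of_var_ne_zero μ hv, integrable_withDensity_iff_integrable_smul'
    (measurable_gaussianPDF μ v) (ae_of_all _ fun _ => gaussianPDF_lt_top)]
  simp [toReal_gaussianPDF]

lemma hasDerivAt_gaussianPDFReal (hv : v ≠ 0) (y : ℝ) :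
    HasDerivAt (gaussianPDFReal μ v) (-((y - μ) / v) * gaussianPDFReal μ v y) y := by
  have hexp : HasDerivAt (fun x : ℝ => -(x - μ) ^ 2 / (2 * v)) (-((y - μ) / v)) y :=
    (((hasDerivAt_id' y).sub_const μ).fun_pow 2).fun_neg.div_const (2 * (v : ℝ)) |>.congr_deriv
      (by field_simp; ring)
  rw [gaussianPDFReal_def]
  exact (hexp.exp.const_mul (√(2 * π * v))⁻¹).congr_deriv (by ring)

theorem integral_sub_mul_gaussianReal (hv : v ≠ 0) {g g' : ℝ → ℝ}
    (hg : ∀ y, HasDerivAt g (g' y) y) (hg_int : Integrable g (gaussianReal μ v))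
    (hg'_int : Integrable g' (gaussianReal μ v))
    (hyg_int : Integrable (fun y => (y - μ) * g y) (gaussianReal μ v)) :
    ∫ y, (y - μ) * g y ∂gaussianReal μ v = v * ∫ y, g' y ∂gaussianReal μ v := by
  rw [integrable_gaussianReal_iff hv] at hg_int hg'_int hyg_int
  simp only [integral_gaussianReal_eq_integral_smul hv, smul_eq_mul]
  have hΦ : ∀ y, HasDerivAt (fun y => gaussianPDFReal μ v y * g y)
      (gaussianPDFReal μ v y * g' y - (v : ℝ)⁻¹ * (gaussianPDFReal μ v y * ((y - μ) * g y))) y :=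
    fun y => ((hasDerivAt_gaussianPDFReal hv y).mul (hg y)).congr_deriv (by field_simp; ring)
  have h0 := integral_eq_zero_of_hasDerivAt_of_integrable hΦ
    (hg'_int.sub (hyg_int.const_mul _)) hg_int
  rw [integral_sub hg'_int (hyg_int.const_mul _), integral_const_mul, sub_eq_zero] at h0
  rw [h0]
  field_simp

lemma integrable_one_add_abs_pow_gaussianReal (μ : ℝ) (v : ℝ≥0) (n : ℕ) :
    Integrable (fun y => (1 + |y|) ^ n) (gaussianReal μ v) := by
  have hid : MemLp (fun y : ℝ => |y|) n (gaussianReal μ v) :=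
    (memLp_id_gaussianReal' n (ENNReal.natCast_ne_top n)).norm
  have hone : MemLp (fun _ : ℝ => (1 : ℝ)) n (gaussianReal μ v) := memLp_const 1
  have h : MemLp (fun y : ℝ => 1 + |y|) n (gaussianReal μ v) := hone.add hid
  refine h.integrable_norm_pow'.congr (ae_of_all _ fun y => ?_)
  simp only [Real.norm_eq_abs, abs_of_nonneg (by positivity : (0 : ℝ) ≤ 1 + |y|)]

end ProbabilityTheory

lemma measurable_of_hasDerivAt {f f' : ℝ → ℝ} (hf : ∀ z, HasDerivAt f (f' z) z) :
    Measurable f :=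
  (continuous_iff_continuousAt.2 fun z => (hf z).continuousAt).measurable

lemma measurable_deriv_of_hasDerivAt {f f' : ℝ → ℝ} (hf : ∀ z, HasDerivAt f (f' z) z) :
    Measurable f' := by
  simpa only [funext fun z => (hf z).deriv] using measurable_deriv f

lemma abs_le_abs_add_one_of_mem_ball {x u : ℝ} (hu : u ∈ Metric.ball x 1) : |u| ≤ |x| + 1 := by
  rw [Metric.mem_ball, Real.dist_eq] at hu
  linarith [abs_sub_abs_le_abs_sub u x]

lemma one_add_abs_mul_sqrt_le (σ : ℝ) {t : ℝ} (ht : 0 ≤ t) :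
    1 + |σ * √t| ≤ (1 + |σ|) * (1 + t) := by
  rw [abs_mul, abs_of_nonneg (sqrt_nonneg t)]
  nlinarith [sq_sqrt ht, sqrt_nonneg t, abs_nonneg σ, sq_nonneg (√t - 1)]

lemma integrableOn_exp_neg_mul_one_add_pow {ρ : ℝ} (hρ : 0 < ρ) (n : ℕ) :
    IntegrableOn (fun t => exp (-ρ * t) * (1 + t) ^ n) (Ioi 0) := by
  have hpow (k : ℕ) : IntegrableOn (fun t : ℝ => t ^ k * exp (-ρ * t)) (Ioi 0) := by
    refine (integrableOn_rpow_mul_exp_neg_mul_rpow (s := k) (p := 1)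
      (by linarith [k.cast_nonneg (α := ℝ)]) one_pos hρ).congr_fun (fun t _ => ?_)
      measurableSet_Ioi
    simp
  have hsum : IntegrableOn (fun t : ℝ =>
      ∑ k ∈ Finset.range (n + 1), (n.choose k : ℝ) * (t ^ k * exp (-ρ * t))) (Ioi 0) :=
    integrable_finsetSum _ fun k _ => (hpow k).const_mul _
  refine hsum.congr_fun (fun t _ => ?_) measurableSet_Ioi
  simp only [add_comm 1 t, add_pow, one_pow, mul_one, Finset.mul_sum]
  exact Finset.sum_congr rfl fun k _ => by ring

local notation "γ" => gaussianReal 0 1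

noncomputable def gaussianAverage (f : ℝ → ℝ) (x s : ℝ) : ℝ :=
  ∫ y, f (x + s * y) ∂γ

lemma gaussianAverage_zero (f : ℝ → ℝ) (x : ℝ) : gaussianAverage f x 0 = f x := by
  simp [gaussianAverage]

@[fun_prop]
lemma measurable_gaussianAverage {f : ℝ → ℝ} (hf : Measurable f) (x : ℝ) :
    Measurable (gaussianAverage f x) :=
  (hf.comp (by fun_prop : Measurable fun p : ℝ × ℝ => x + p.1 * p.2)).stronglyMeasurable
    |>.integral_prod_right' |>.measurable

noncomputable def heatResolvent (ρ σ : ℝ) (f : ℝ → ℝ) (x : ℝ) : ℝ :=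
  ∫ t in Ioi 0, exp (-ρ * t) * gaussianAverage f x (σ * √t)

lemma p1_eq_heatResolvent (ρ σ : ℝ) {f : ℝ → ℝ} (hf : Measurable f) :
    p1 ρ σ f = heatResolvent ρ σ f := by
  funext x
  refine setIntegral_congr_fun measurableSet_Ioi fun t ht => ?_
  have hmap :
      (gaussianReal 0 1).map (fun y => σ * √t * y) = gaussianReal 0 (σ ^ 2 * t).toNNReal := by
    rw [gaussianReal_map_const_mul, mul_zero, mul_one]
    congr 1
    ext
    rw [NNReal.coe_mk, Real.coe_toNNReal _ (mul_nonneg (sq_nonneg σ) (le_of_lt ht)), mul_pow,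
      sq_sqrt (le_of_lt ht)]
  rw [← hmap, integral_map (by fun_prop)
    (by fun_prop : Measurable fun y => f (x + y)).aestronglyMeasurable]
  rfl

def PolyGrowth (K : ℝ) (n : ℕ) (f : ℝ → ℝ) : Prop := ∀ z, |f z| ≤ K * (1 + |z|) ^ n

namespace PolyGrowth

variable {f f' f'' : ℝ → ℝ} {K : ℝ} {n : ℕ} {ρ : ℝ}

lemma nonneg (hf : PolyGrowth K n f) : 0 ≤ K := by
  simpa using (abs_nonneg _).trans (hf 0)

lemma of_hasDerivAt (hf : ∀ z, HasDerivAt f (f' z) z) (hf' : PolyGrowth K n f') :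
    PolyGrowth (|f 0| + K) (n + 1) f := by
  intro z
  have hK := hf'.nonneg
  have hmono : ∀ w ∈ Metric.closedBall (0 : ℝ) |z|, ‖f' w‖ ≤ K * (1 + |z|) ^ n := by
    intro w hw
    rw [mem_closedBall_zero_iff, Real.norm_eq_abs] at hw
    exact (hf' w).trans (by gcongr)
  have hmvt := (convex_closedBall (0 : ℝ) |z|).norm_image_sub_le_of_norm_hasDerivWithin_le
    (y := z) (fun w _ => (hf w).hasDerivWithinAt) hmono
    (Metric.mem_closedBall_self (abs_nonneg z)) (by simp)
  rw [Real.norm_eq_abs, Real.norm_eq_abs, sub_zero] at hmvt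
  calc |f z| ≤ |f 0| + |f z - f 0| := by linarith [abs_sub_abs_le_abs_sub (f z) (f 0)]
    _ ≤ |f 0| * (1 + |z|) ^ (n + 1) + K * (1 + |z|) ^ n * (1 + |z|) := by
        gcongr
        · exact le_mul_of_one_le_right (abs_nonneg _) (one_le_pow₀ (by simp))
        · exact hmvt.trans (by gcongr; linarith)
    _ = (|f 0| + K) * (1 + |z|) ^ (n + 1) := by ring

lemma abs_comp_add_mul_le (hf : PolyGrowth K n f) (x s y : ℝ) :
    |f (x + s * y)| ≤ K * ((1 + |x|) * (1 + |s|)) ^ n * (1 + |y|) ^ n := by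
  have hsplit : 1 + |x + s * y| ≤ (1 + |x|) * (1 + |s|) * (1 + |y|) := by
    have := abs_add_le x (s * y)
    rw [abs_mul] at this
    nlinarith [abs_nonneg x, abs_nonneg s, abs_nonneg y, mul_nonneg (abs_nonneg x) (abs_nonneg s),
      mul_nonneg (mul_nonneg (abs_nonneg x) (abs_nonneg s)) (abs_nonneg y)]
  calc |f (x + s * y)| ≤ K * (1 + |x + s * y|) ^ n := hf _
    _ ≤ K * ((1 + |x|) * (1 + |s|) * (1 + |y|)) ^ n := by gcongr; exact hf.nonneg
    _ = _ := by rw [mul_pow, mul_assoc]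

lemma abs_mul_comp_add_mul_le (hf : PolyGrowth K n f) (x s y : ℝ) :
    |y * f (x + s * y)| ≤ K * ((1 + |x|) * (1 + |s|)) ^ n * (1 + |y|) ^ (n + 1) := by
  have := hf.nonneg
  calc |y * f (x + s * y)|
      ≤ (1 + |y|) * (K * ((1 + |x|) * (1 + |s|)) ^ n * (1 + |y|) ^ n) := by
        rw [abs_mul]
        gcongr
        · linarith
        · exact hf.abs_comp_add_mul_le x s y
    _ = _ := by ring

lemma integrable_comp_add_mul (hf_meas : Measurable f) (hf : PolyGrowth K n f) (x s : ℝ)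
    {μ : ℝ} {v : ℝ≥0} : Integrable (fun y => f (x + s * y)) (gaussianReal μ v) :=
  ((integrable_one_add_abs_pow_gaussianReal μ v n).const_mul _).mono'
    (hf_meas.comp (by fun_prop)).aestronglyMeasurable
    (ae_of_all _ fun y => hf.abs_comp_add_mul_le x s y)

lemma abs_gaussianAverage_le (hf_meas : Measurable f) (hf : PolyGrowth K n f) (x s : ℝ) :
    |gaussianAverage f x s| ≤ K * ((1 + |x|) * (1 + |s|)) ^ n * ∫ y, (1 + |y|) ^ n ∂γ := by
  rw [← integral_const_mul]
  exact abs_integral_le_integral_abs.trans <| integral_mono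
    (hf.integrable_comp_add_mul hf_meas x s).abs
    ((integrable_one_add_abs_pow_gaussianReal 0 1 n).const_mul _)
    fun y => hf.abs_comp_add_mul_le x s y

lemma hasDerivAt_gaussianAverage_center (hf : ∀ z, HasDerivAt f (f' z) z)
    (hf' : PolyGrowth K n f') (x s : ℝ) :
    HasDerivAt (fun u => gaussianAverage f u s) (gaussianAverage f' x s) x := by
  have hf_meas := measurable_of_hasDerivAt hf
  refine (hasDerivAt_integral_of_dominated_loc_of_deriv_le (Metric.ball_mem_nhds x one_pos)
    (F := fun u y => f (u + s * y)) (F' := fun u y => f' (u + s * y))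
    (bound := fun y => K * ((2 + |x|) * (1 + |s|)) ^ n * (1 + |y|) ^ n)
    (Eventually.of_forall fun u => (hf_meas.comp (by fun_prop)).aestronglyMeasurable)
    ((hf'.of_hasDerivAt hf).integrable_comp_add_mul hf_meas x s)
    ((measurable_deriv_of_hasDerivAt hf).comp (by fun_prop)).aestronglyMeasurable
    (ae_of_all _ fun y u hu => ?_)
    ((integrable_one_add_abs_pow_gaussianReal 0 1 n).const_mul _)
    (ae_of_all _ fun y u _ => (hf (u + s * y)).comp_add_const u (s * y))).2
  have hu' := abs_le_abs_add_one_of_mem_ball hu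
  have := hf'.nonneg
  refine (hf'.abs_comp_add_mul_le u s y).trans ?_
  gcongr K * (?_ * _) ^ n * _
  linarith

lemma hasDerivAt_gaussianAverage_scale (hf : ∀ z, HasDerivAt f (f' z) z)
    (hf' : ∀ z, HasDerivAt f' (f'' z) z) (hf'' : PolyGrowth K n f'') (x s : ℝ) :
    HasDerivAt (gaussianAverage f x) (s * gaussianAverage f'' x s) s := by
  have hf_meas := measurable_of_hasDerivAt hf
  have hf'_meas := measurable_deriv_of_hasDerivAt hf
  have hg := hf''.of_hasDerivAt hf'
  have key := hasDerivAt_integral_of_dominated_loc_of_deriv_le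
    (Metric.ball_mem_nhds s one_pos) (F := fun s y => f (x + s * y))
    (F' := fun s y => y * f' (x + s * y))
    (bound := fun y => (|f' 0| + K) * ((1 + |x|) * (2 + |s|)) ^ (n + 1) * (1 + |y|) ^ (n + 2))
    (Eventually.of_forall fun u => (hf_meas.comp (by fun_prop)).aestronglyMeasurable)
    ((hg.of_hasDerivAt hf).integrable_comp_add_mul hf_meas x s)
    (by fun_prop : Measurable fun y => y * f' (x + s * y)).aestronglyMeasurable
    (ae_of_all _ fun y u hu => ?_)
    ((integrable_one_add_abs_pow_gaussianReal 0 1 (n + 2)).const_mul _)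
    (ae_of_all _ fun y u _ => ((hf (x + u * y)).comp u
      ((hasDerivAt_id' u).mul_const y |>.const_add x)).congr_deriv (by ring))
  · obtain ⟨hyg_int, hderiv⟩ := key
    have hstein := integral_sub_mul_gaussianReal (μ := 0) one_ne_zero
      (g := fun y => f' (x + s * y))
      (fun y => ((hf' (x + s * y)).comp y
        ((hasDerivAt_id' y).const_mul s |>.const_add x)).congr_deriv (by ring))
      (hg.integrable_comp_add_mul hf'_meas x s)
      ((hf''.integrable_comp_add_mul (measurable_deriv_of_hasDerivAt hf') x s).const_mul s)
      (by simpa using hyg_int)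
    simp only [sub_zero, NNReal.coe_one, one_mul, integral_const_mul] at hstein
    rwa [hstein] at hderiv
  · have hu' := abs_le_abs_add_one_of_mem_ball hu
    have := hg.nonneg
    refine (hg.abs_mul_comp_add_mul_le x u y).trans ?_
    gcongr _ * (_ * ?_) ^ _ * _
    linarith

lemma norm_resolventIntegrand_le (hf_meas : Measurable f) (hf : PolyGrowth K n f) (σ : ℝ)
    {x R : ℝ} (hx : |x| ≤ R) {t : ℝ} (ht : 0 ≤ t) :
    ‖exp (-ρ * t) * gaussianAverage f x (σ * √t)‖ ≤
      K * ((1 + R) * (1 + |σ|)) ^ n * (∫ y, (1 + |y|) ^ n ∂γ) * (exp (-ρ * t) * (1 + t) ^ n) := by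
  have hK := hf.nonneg
  have hM : 0 ≤ ∫ y, (1 + |y|) ^ n ∂γ := integral_nonneg fun y => by positivity
  rw [norm_mul, norm_of_nonneg (exp_pos _).le, Real.norm_eq_abs]
  calc exp (-ρ * t) * |gaussianAverage f x (σ * √t)|
      ≤ exp (-ρ * t) * (K * ((1 + |x|) * (1 + |σ * √t|)) ^ n * ∫ y, (1 + |y|) ^ n ∂γ) := by
        gcongr
        exact hf.abs_gaussianAverage_le hf_meas x _
    _ ≤ exp (-ρ * t) * (K * ((1 + R) * ((1 + |σ|) * (1 + t))) ^ n * ∫ y, (1 + |y|) ^ n ∂γ) := by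
        gcongr
        · linarith [abs_nonneg x]
        · exact one_add_abs_mul_sqrt_le σ ht
    _ = _ := by simp only [mul_pow]; ring

lemma integrableOn_resolventIntegrand (hρ : 0 < ρ) (hf_meas : Measurable f)
    (hf : PolyGrowth K n f) (σ x : ℝ) :
    IntegrableOn (fun t => exp (-ρ * t) * gaussianAverage f x (σ * √t)) (Ioi 0) :=
  ((integrableOn_exp_neg_mul_one_add_pow hρ n).const_mul _).mono'
    (by fun_prop : Measurable fun t =>
      exp (-ρ * t) * gaussianAverage f x (σ * √t)).aestronglyMeasurable
    ((ae_restrict_mem measurableSet_Ioi).mono fun t ht =>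
      hf.norm_resolventIntegrand_le hf_meas σ le_rfl (le_of_lt ht))

lemma hasDerivAt_heatResolvent (hρ : 0 < ρ) (hf : ∀ z, HasDerivAt f (f' z) z)
    (hf' : PolyGrowth K n f') (σ x : ℝ) :
    HasDerivAt (heatResolvent ρ σ f) (heatResolvent ρ σ f' x) x := by
  have hf_meas := measurable_of_hasDerivAt hf
  have hf'_meas := measurable_deriv_of_hasDerivAt hf
  refine (hasDerivAt_integral_of_dominated_loc_of_deriv_le (Metric.ball_mem_nhds x one_pos)
    (F := fun u t => exp (-ρ * t) * gaussianAverage f u (σ * √t))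
    (F' := fun u t => exp (-ρ * t) * gaussianAverage f' u (σ * √t))
    (bound := fun t => K * ((1 + (|x| + 1)) * (1 + |σ|)) ^ n * (∫ y, (1 + |y|) ^ n ∂γ) *
      (exp (-ρ * t) * (1 + t) ^ n))
    (Eventually.of_forall fun u => (by fun_prop : Measurable fun t =>
      exp (-ρ * t) * gaussianAverage f u (σ * √t)).aestronglyMeasurable)
    ((hf'.of_hasDerivAt hf).integrableOn_resolventIntegrand hρ hf_meas σ x)
    (by fun_prop : Measurable fun t =>
      exp (-ρ * t) * gaussianAverage f' x (σ * √t)).aestronglyMeasurable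
    ((ae_restrict_mem measurableSet_Ioi).mono fun t ht u hu =>
      hf'.norm_resolventIntegrand_le hf'_meas σ (abs_le_abs_add_one_of_mem_ball hu) (le_of_lt ht))
    ((integrableOn_exp_neg_mul_one_add_pow hρ n).const_mul _)
    (ae_of_all _ fun t u _ => (hasDerivAt_gaussianAverage_center hf hf' u _).const_mul _)).2

lemma heatResolvent_equation (hρ : 0 < ρ) (hf : ∀ z, HasDerivAt f (f' z) z)
    (hf' : ∀ z, HasDerivAt f' (f'' z) z) (hf'' : PolyGrowth K n f'') (σ x : ℝ) :
    ρ * heatResolvent ρ σ f x - σ ^ 2 / 2 * heatResolvent ρ σ f'' x = f x := by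
  have hf_meas := measurable_of_hasDerivAt hf
  set F := fun t => exp (-ρ * t) * gaussianAverage f x (σ * √t) with hF
  have hF_deriv : ∀ t ∈ Ioi 0, HasDerivAt F
      (σ ^ 2 / 2 * (exp (-ρ * t) * gaussianAverage f'' x (σ * √t)) - ρ * F t) t := by
    intro t ht
    have hsqrt : √t ≠ 0 := (sqrt_pos.2 ht).ne'
    have hexp := ((hasDerivAt_id' t).const_mul (-ρ)).exp
    have hscale := (hasDerivAt_gaussianAverage_scale hf hf' hf'' x (σ * √t)).comp t
      ((hasDerivAt_sqrt (ne_of_gt ht)).const_mul σ)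
    refine (hexp.mul hscale).congr_deriv ?_
    simp only [hF, Function.comp_apply]
    field_simp
    ring
  have hF_cont : ContinuousWithinAt F (Ici 0) 0 := by
    have hcont : ContinuousAt (fun t => gaussianAverage f x (σ * √t)) 0 :=
      ContinuousAt.comp (f := fun t => σ * √t) (x := 0)
        (hasDerivAt_gaussianAverage_scale hf hf' hf'' x _).continuousAt (by fun_prop)
    exact ((by fun_prop : Continuous fun t : ℝ => exp (-ρ * t)).continuousAt.mul
      hcont).continuousWithinAt
  have hF_int := ((hf''.of_hasDerivAt hf').of_hasDerivAt hf).integrableOn_resolventIntegrand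
    hρ hf_meas σ x
  have hQ_int := hf''.integrableOn_resolventIntegrand hρ (measurable_deriv_of_hasDerivAt hf') σ x
  have hF'_int := (hQ_int.const_mul (σ ^ 2 / 2)).sub (hF_int.const_mul ρ)
  have hftc := integral_Ioi_of_hasDerivAt_of_tendsto hF_cont hF_deriv hF'_int
    (tendsto_zero_of_hasDerivAt_of_integrableOn_Ioi hF_deriv hF'_int hF_int)
  rw [integral_sub (hQ_int.const_mul _) (hF_int.const_mul ρ), integral_const_mul,
    integral_const_mul] at hftc
  simp only [hF, sqrt_zero, mul_zero, exp_zero, one_mul, gaussianAverage_zero] at hftc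
  unfold heatResolvent
  linarith

end PolyGrowth

theorem p1_resolvent_equation_general
    (ρ σ : ℝ) (hρ : 0 < ρ)
    (h : ℝ → ℝ) (hh : ContDiff ℝ 2 h)
    (C : ℝ) (hbound : ∀ y : ℝ, |deriv (deriv h) y| ≤ C) :
    (Differentiable ℝ (p1 ρ σ h) ∧ Differentiable ℝ (deriv (p1 ρ σ h))) ∧
    (∀ x : ℝ, ρ * p1 ρ σ h x - σ ^ 2 / 2 * deriv (deriv (p1 ρ σ h)) x = h x) := by
  have hd1 : ∀ z, HasDerivAt h (deriv h z) z :=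
    fun z => (hh.differentiable two_ne_zero z).hasDerivAt
  have hd2 : ∀ z, HasDerivAt (deriv h) (deriv (deriv h) z) z :=
    fun z => (hh.differentiable_deriv_two z).hasDerivAt
  have hg2 : PolyGrowth C 0 (deriv (deriv h)) := fun z => by simpa using hbound z
  have hP (x : ℝ) := (hg2.of_hasDerivAt hd2).hasDerivAt_heatResolvent hρ hd1 σ x
  have hP' (x : ℝ) := hg2.hasDerivAt_heatResolvent hρ hd2 σ x
  have hderiv : deriv (heatResolvent ρ σ h) = heatResolvent ρ σ (deriv h) :=
    funext fun x => (hP x).deriv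
  rw [p1_eq_heatResolvent ρ σ hh.continuous.measurable, hderiv]
  refine ⟨⟨fun x => (hP x).differentiableAt, fun x => (hP' x).differentiableAt⟩, fun x => ?_⟩
  rw [(hP' x).deriv]
  exact hg2.heatResolvent_equation hρ hd1 hd2 σ x

/-- The resolvent equation `ρ p₁ − (σ̃²/2) p₁'' = h` for the discounted expected running cost
of the uncontrolled one-dimensional diffusion, for `h ∈ C²` with bounded second derivative. -/
theorem p1_resolvent_equation
    (ρ σ : ℝ) (hρ : 0 < ρ) (hσ : 0 < σ)
    (h : ℝ → ℝ) (hh : ContDiff ℝ 2 h)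
    (C : ℝ) (hbound : ∀ y : ℝ, |deriv (deriv h) y| ≤ C) :
    (Differentiable ℝ (p1 ρ σ h) ∧ Differentiable ℝ (deriv (p1 ρ σ h))) ∧
    (∀ x : ℝ, ρ * p1 ρ σ h x - σ ^ 2 / 2 * deriv (deriv (p1 ρ σ h)) x = h x) :=
  p1_resolvent_equation_general ρ σ hρ h hh C hbound
end

section
/- Let ρ > 0, σ > 0, K > 0, set λ = √(2ρ)/σ, and let p : ℝ → ℝ be even and three times continuously differentiable with p''(x) > 0 for all x and p'''(x) ≤ 0 for all x ≥ 0. Let c > 0 satisfy (σ/√(2ρ)) tanh(λc) = (p'(c) − K/2)/p''(c). Define u(x) = p(x) − (σ² p''(c)/(2ρ cosh(λc))) cosh(λx) for |x| ≤ c and u(x) = u(c) + (K/2)(|x| − c) for |x| > c. Then u is even, u is twice continuously differentiable on ℝ, u''(x) ≥ 0 for x ∈ [0, c], 0 ≤ u'(x) ≤ K/2 for x ∈ [0, c], and |u'(x)| ≤ K/2 for all x ∈ ℝ. -/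
/-!
On `[-c, c]` the function is `g = p - A cosh (λ ·)`. The constant `A` is chosen so that
`g''(c) = 0`, and the smooth-pasting equation says exactly `g'(c) = K/2`; hence the affine
continuation with slope `K/2` beyond `c` matches `g` to second order, and by evenness the same
holds at `-c`, so `u` is `C²`. On `[0, c]`, `p''` decreases and `cosh (λ ·)` increases, so
`g'' x ≥ p''(c) - A λ² cosh (λ c) = g''(c) = 0`; thus `g'` increases from `g'(0) = 0` (evenness)
to `g'(c) = K/2`, which gives the gradient bounds.
-/

open Real Set Filter Topology

section Pasting

variable {f g : ℝ → ℝ} {c : ℝ}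

theorem hasDerivAt_ite_le (hf : Differentiable ℝ f) (hg : Differentiable ℝ g)
    (h₀ : f c = g c) (h₁ : deriv f c = deriv g c) (x : ℝ) :
    HasDerivAt (fun y => if y ≤ c then f y else g y)
      (if x ≤ c then deriv f x else deriv g x) x := by
  rcases lt_trichotomy x c with hx | rfl | hx
  · rw [if_pos hx.le]
    refine (hf x).hasDerivAt.congr_of_eventuallyEq ?_
    filter_upwards [Iio_mem_nhds hx] with y hy
    exact if_pos hy.le
  · rw [if_pos le_rfl]
    have hL : HasDerivWithinAt (fun y => if y ≤ x then f y else g y) (deriv f x) (Iic x) x :=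
      (hf x).hasDerivAt.hasDerivWithinAt.congr (fun y hy => if_pos hy) (if_pos le_rfl)
    have hR : HasDerivWithinAt (fun y => if y ≤ x then f y else g y) (deriv f x) (Ici x) x := by
      rw [h₁]
      refine (hg x).hasDerivAt.hasDerivWithinAt.congr (fun y hy => ?_) (by simp [h₀])
      rcases (mem_Ici.mp hy).eq_or_lt with rfl | hy
      · simp [h₀]
      · exact if_neg (not_le.mpr hy)
    simpa [Iic_union_Ici] using hL.union hR
  · rw [if_neg (not_le.mpr hx)]
    refine (hg x).hasDerivAt.congr_of_eventuallyEq ?_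
    filter_upwards [Ioi_mem_nhds hx] with y hy
    exact if_neg (not_le.mpr hy)

theorem deriv_ite_le (hf : Differentiable ℝ f) (hg : Differentiable ℝ g)
    (h₀ : f c = g c) (h₁ : deriv f c = deriv g c) :
    deriv (fun y => if y ≤ c then f y else g y) =
      fun x => if x ≤ c then deriv f x else deriv g x :=
  funext fun x => (hasDerivAt_ite_le hf hg h₀ h₁ x).deriv

theorem contDiff_ite_le (n : ℕ) (hf : ContDiff ℝ n f) (hg : ContDiff ℝ n g)
    (h : ∀ k ≤ n, iteratedDeriv k f c = iteratedDeriv k g c) :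
    ContDiff ℝ n (fun y => if y ≤ c then f y else g y) := by
  induction n generalizing f g with
  | zero =>
    rw [Nat.cast_zero, contDiff_zero] at *
    exact hf.if_le hg continuous_id continuous_const fun x hx => by
      simpa [hx] using h 0 le_rfl
  | succ n ih =>
    rw [Nat.cast_succ, contDiff_succ_iff_deriv] at hf hg ⊢
    have h₀ : f c = g c := by simpa using h 0 (by omega)
    have h₁ : deriv f c = deriv g c := by simpa using h 1 (by omega)
    refine ⟨fun x => (hasDerivAt_ite_le hf.1 hg.1 h₀ h₁ x).differentiableAt, by simp, ?_⟩
    rw [deriv_ite_le hf.1 hg.1 h₀ h₁]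
    exact ih hf.2.2 hg.2.2 fun k hk => by
      simpa [iteratedDeriv_succ'] using h (k + 1) (by omega)

end Pasting

theorem deriv_neg_of_even {u : ℝ → ℝ} (hu : ∀ x, u (-x) = u x) (x : ℝ) :
    deriv u (-x) = -deriv u x := by
  have h := deriv_comp_neg u (-x)
  rwa [funext hu, neg_neg] at h

theorem contDiff_of_even_of_eqOn_Ioi {u F : ℝ → ℝ} {a : ℝ} {n : WithTop ℕ∞} (ha : a < 0)
    (hu : ∀ x, u (-x) = u x) (hF : ContDiff ℝ n F) (hEq : EqOn u F (Ioi a)) :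
    ContDiff ℝ n u := by
  refine contDiff_iff_contDiffAt.mpr fun x => ?_
  rcases lt_or_ge a x with hx | hx
  · exact hF.contDiffAt.congr_of_eventuallyEq (eventuallyEq_of_mem (Ioi_mem_nhds hx) hEq)
  · have hu_neg : u =ᶠ[𝓝 x] fun y => F (-y) := by
      filter_upwards [Iio_mem_nhds (show x < -a by linarith)] with y (hy : y < -a)
      rw [← hu y]
      exact hEq (show a < -y by linarith)
    exact (hF.comp contDiff_neg).contDiffAt.congr_of_eventuallyEq hu_neg

section AffineContinuation

variable {g : ℝ → ℝ} {c k : ℝ}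

noncomputable def affineContinuation (g : ℝ → ℝ) (c k x : ℝ) : ℝ :=
  if x ≤ c then g x else g c + k * (x - c)

noncomputable def evenAffineContinuation (g : ℝ → ℝ) (c k x : ℝ) : ℝ :=
  if |x| ≤ c then g x else g c + k * (|x| - c)

theorem hasDerivAt_const_add_mul_sub (b k c x : ℝ) :
    HasDerivAt (fun y => b + k * (y - c)) k x := by
  simpa using ((hasDerivAt_id x).sub_const c).const_mul k |>.const_add b

theorem deriv_affineContinuation (hg : Differentiable ℝ g) (hk : deriv g c = k) :
    deriv (affineContinuation g c k) = fun x => if x ≤ c then deriv g x else k := by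
  unfold affineContinuation
  have h := deriv_ite_le (f := g) (g := fun y => g c + k * (y - c)) (c := c) hg
    (fun x => (hasDerivAt_const_add_mul_sub _ k c x).differentiableAt) (by simp)
    (by rw [hk, (hasDerivAt_const_add_mul_sub _ k c c).deriv])
  simpa only [(hasDerivAt_const_add_mul_sub _ k c _).deriv] using h

theorem deriv_deriv_affineContinuation (hg : ContDiff ℝ 2 g) (hk : deriv g c = k)
    (h₂ : deriv (deriv g) c = 0) :
    deriv (deriv (affineContinuation g c k)) =
      fun x => if x ≤ c then deriv (deriv g) x else 0 := by
  rw [deriv_affineContinuation (hg.differentiable two_ne_zero) hk]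
  simpa using deriv_ite_le (c := c) hg.differentiable_deriv_two (differentiable_const k) hk
    (by simpa using h₂)

theorem contDiff_affineContinuation (hg : ContDiff ℝ 2 g) (hk : deriv g c = k)
    (h₂ : deriv (deriv g) c = 0) : ContDiff ℝ 2 (affineContinuation g c k) := by
  refine contDiff_ite_le 2 hg (by fun_prop) fun n hn => ?_
  interval_cases n
  · simp
  · simp [hk, (hasDerivAt_const_add_mul_sub _ k c _).deriv]
  · simp [iteratedDeriv_succ, h₂]

theorem evenAffineContinuation_neg (hg : ∀ x, g (-x) = g x) (x : ℝ) :
    evenAffineContinuation g c k (-x) = evenAffineContinuation g c k x := by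
  simp only [evenAffineContinuation, abs_neg, hg]

theorem eqOn_evenAffineContinuation_Ioi :
    EqOn (evenAffineContinuation g c k) (affineContinuation g c k) (Ioi (-c)) := by
  intro x hx
  by_cases h : x ≤ c
  · simp [evenAffineContinuation, affineContinuation, h, abs_le.mpr ⟨(mem_Ioi.mp hx).le, h⟩]
  · have hx₀ : 0 < x := by linarith [mem_Ioi.mp hx, not_le.mp h]
    simp [evenAffineContinuation, affineContinuation, h, abs_of_pos hx₀]

theorem evenAffineContinuation_eventuallyEq {x : ℝ} (hx : -c < x) :
    evenAffineContinuation g c k =ᶠ[𝓝 x] affineContinuation g c k :=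
  eventuallyEq_of_mem (Ioi_mem_nhds hx) eqOn_evenAffineContinuation_Ioi

theorem contDiff_evenAffineContinuation (hc : 0 < c) (hg_even : ∀ x, g (-x) = g x)
    (hg : ContDiff ℝ 2 g) (hk : deriv g c = k) (h₂ : deriv (deriv g) c = 0) :
    ContDiff ℝ 2 (evenAffineContinuation g c k) :=
  contDiff_of_even_of_eqOn_Ioi (neg_lt_zero.mpr hc) (evenAffineContinuation_neg hg_even)
    (contDiff_affineContinuation hg hk h₂) eqOn_evenAffineContinuation_Ioi

theorem deriv_evenAffineContinuation (hg : Differentiable ℝ g) (hk : deriv g c = k) {x : ℝ}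
    (hx : -c < x) :
    deriv (evenAffineContinuation g c k) x = if x ≤ c then deriv g x else k := by
  rw [(evenAffineContinuation_eventuallyEq hx).deriv_eq, deriv_affineContinuation hg hk]

theorem deriv_deriv_evenAffineContinuation (hg : ContDiff ℝ 2 g) (hk : deriv g c = k)
    (h₂ : deriv (deriv g) c = 0) {x : ℝ} (hx : -c < x) :
    deriv (deriv (evenAffineContinuation g c k)) x =
      if x ≤ c then deriv (deriv g) x else 0 := by
  rw [(evenAffineContinuation_eventuallyEq hx).deriv.deriv_eq,
    deriv_deriv_affineContinuation hg hk h₂]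

theorem abs_deriv_evenAffineContinuation_le (hc : 0 < c) (hg_even : ∀ x, g (-x) = g x)
    (hg : Differentiable ℝ g) (hk : deriv g c = k)
    (hbound : ∀ x ∈ Icc 0 c, |deriv g x| ≤ k) (x : ℝ) :
    |deriv (evenAffineContinuation g c k) x| ≤ k := by
  suffices h : ∀ x, 0 ≤ x → |deriv (evenAffineContinuation g c k) x| ≤ k by
    rcases le_total 0 x with hx | hx
    · exact h x hx
    · simpa [deriv_neg_of_even (evenAffineContinuation_neg hg_even)] using h (-x) (by linarith)
  intro x hx
  rw [deriv_evenAffineContinuation hg hk (by linarith)]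
  split_ifs with hxc
  · exact hbound x ⟨hx, hxc⟩
  · have hk₀ : 0 ≤ k := (abs_nonneg _).trans (hk ▸ hbound c ⟨hc.le, le_rfl⟩)
    exact (abs_of_nonneg hk₀).le

end AffineContinuation

theorem deriv_mem_Icc_of_even_of_deriv_deriv_nonneg {g : ℝ → ℝ} {c : ℝ} (hc : 0 ≤ c)
    (hg : ContDiff ℝ 2 g) (hg_even : ∀ x, g (-x) = g x)
    (hconv : ∀ x ∈ Icc 0 c, 0 ≤ deriv (deriv g) x) (x : ℝ) (hx : x ∈ Icc 0 c) :
    0 ≤ deriv g x ∧ deriv g x ≤ deriv g c := by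
  have hg₂ : Differentiable ℝ (deriv g) := hg.differentiable_deriv_two
  have hmono : MonotoneOn (deriv g) (Icc 0 c) :=
    monotoneOn_of_deriv_nonneg (convex_Icc 0 c) hg₂.continuous.continuousOn
      hg₂.differentiableOn fun y hy => hconv y (interior_subset hy)
  have hg₀ : deriv g 0 = 0 := by
    have h := deriv_neg_of_even hg_even 0
    rw [neg_zero] at h
    linarith
  exact ⟨hg₀ ▸ hmono ⟨le_rfl, hc⟩ hx hx.1, hmono hx ⟨hc, le_rfl⟩ hx.2⟩

section CoshCorrection

variable {p : ℝ → ℝ}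

theorem deriv_sub_mul_cosh (hp : Differentiable ℝ p) (A lam : ℝ) :
    deriv (fun x => p x - A * cosh (lam * x)) =
      fun x => deriv p x - A * lam * sinh (lam * x) := by
  funext x
  have h := ((hasDerivAt_id x).const_mul lam).cosh
  exact ((hp x).hasDerivAt.sub (h.const_mul A)).deriv.trans (by simp only [id_eq, mul_one]; ring)

theorem deriv_sub_mul_sinh (hp : Differentiable ℝ p) (B lam : ℝ) :
    deriv (fun x => p x - B * sinh (lam * x)) =
      fun x => deriv p x - B * lam * cosh (lam * x) := by
  funext x
  have h := ((hasDerivAt_id x).const_mul lam).sinh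
  exact ((hp x).hasDerivAt.sub (h.const_mul B)).deriv.trans (by simp only [id_eq, mul_one]; ring)

theorem antitoneOn_deriv_deriv (hp : ContDiff ℝ 3 p)
    (hppp : ∀ x ≥ (0:ℝ), deriv (deriv (deriv p)) x ≤ 0) :
    AntitoneOn (deriv (deriv p)) (Ici 0) := by
  have hp₂ : Differentiable ℝ (deriv (deriv p)) :=
    (hp.deriv' (n := 2)).differentiable_deriv_two
  exact antitoneOn_of_deriv_nonpos (convex_Ici 0) hp₂.continuous.continuousOn
    hp₂.differentiableOn fun x hx => hppp x (interior_subset hx)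

theorem deriv_deriv_sub_mul_cosh_nonneg (hanti : AntitoneOn (deriv (deriv p)) (Ici 0))
    {B lam c x : ℝ} (hq : 0 < deriv (deriv p) c) (hB : B * cosh (lam * c) = deriv (deriv p) c)
    (hx : x ∈ Icc 0 c) : 0 ≤ deriv (deriv p) x - B * cosh (lam * x) := by
  have hB₀ : 0 ≤ B := by nlinarith [cosh_pos (lam * c)]
  have hcosh : cosh (lam * x) ≤ cosh (lam * c) := by
    rw [cosh_le_cosh, abs_mul, abs_mul, abs_of_nonneg hx.1, abs_of_nonneg (hx.1.trans hx.2)]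
    exact mul_le_mul_of_nonneg_left hx.2 (abs_nonneg lam)
  refine sub_nonneg.mpr ?_
  calc B * cosh (lam * x) ≤ B * cosh (lam * c) := mul_le_mul_of_nonneg_left hcosh hB₀
    _ = deriv (deriv p) c := hB
    _ ≤ deriv (deriv p) x := hanti hx.1 (hx.1.trans hx.2) hx.2

end CoshCorrection

theorem smooth_pasting_of_tanh {ρ σ q d k c lam A : ℝ} (hρ : 0 < ρ) (hσ : σ ≠ 0) (hq : q ≠ 0)
    (hlam : lam = √(2 * ρ) / σ) (hA : A = σ ^ 2 * q / (2 * ρ * cosh (lam * c)))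
    (hsp : σ / √(2 * ρ) * tanh (lam * c) = (d - k) / q) :
    A * lam * lam * cosh (lam * c) = q ∧ d - A * lam * sinh (lam * c) = k := by
  have hlam_sq : lam * lam * σ ^ 2 = 2 * ρ := by
    rw [hlam, div_mul_div_comm, ← sq, sq_sqrt (by linarith)]
    field_simp
  have hinv : σ / √(2 * ρ) = lam⁻¹ := by rw [hlam, inv_div]
  have hAq : A * lam * lam * cosh (lam * c) = q := by
    rw [hA]; field_simp; linear_combination hlam_sq
  refine ⟨hAq, ?_⟩
  rw [hinv, tanh_eq_sinh_div_cosh, eq_div_iff hq] at hsp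
  have hAsinh : A * lam * sinh (lam * c) = lam⁻¹ * (sinh (lam * c) / cosh (lam * c)) * q := by
    rw [← hAq]; field_simp
  linarith

theorem explicit_one_dim_value_function_properties_general
    (ρ σ K : ℝ) (hρ : 0 < ρ) (hσ : 0 < σ)
    (p : ℝ → ℝ) (hp : ContDiff ℝ 3 p) (heven : ∀ x, p (-x) = p x)
    (hpp : ∀ x, 0 < deriv (deriv p) x)
    (hppp : ∀ x ≥ (0:ℝ), deriv (deriv (deriv p)) x ≤ 0)
    (c : ℝ) (hc : 0 < c)
    (hsp : σ / Real.sqrt (2 * ρ) * Real.tanh (Real.sqrt (2 * ρ) / σ * c)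
        = (deriv p c - K / 2) / deriv (deriv p) c) :
    let lam : ℝ := Real.sqrt (2 * ρ) / σ
    let A : ℝ := σ ^ 2 * deriv (deriv p) c / (2 * ρ * Real.cosh (lam * c))
    let u : ℝ → ℝ := fun x =>
      if |x| ≤ c then p x - A * Real.cosh (lam * x)
      else (p c - A * Real.cosh (lam * c)) + K / 2 * (|x| - c)
    (∀ x : ℝ, u (-x) = u x) ∧
    ContDiff ℝ 2 u ∧
    (∀ x ∈ Set.Icc (0:ℝ) c, 0 ≤ deriv (deriv u) x) ∧
    (∀ x ∈ Set.Icc (0:ℝ) c, 0 ≤ deriv u x ∧ deriv u x ≤ K / 2) ∧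
    (∀ x : ℝ, |deriv u x| ≤ K / 2) := by
  intro lam A u
  set g : ℝ → ℝ := fun x => p x - A * cosh (lam * x)
  have hu : u = evenAffineContinuation g c (K / 2) := rfl
  have hg_even : ∀ x, g (-x) = g x := fun x => by simp only [g, heven, mul_neg, cosh_neg]
  have hg : ContDiff ℝ 2 g := (hp.of_le (by norm_num)).sub (by fun_prop)
  have hg_diff : Differentiable ℝ g := hg.differentiable two_ne_zero
  have hg' : deriv g = fun x => deriv p x - A * lam * sinh (lam * x) :=
    deriv_sub_mul_cosh (hp.differentiable (by norm_num)) A lam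
  have hg'' : deriv (deriv g) =
      fun x => deriv (deriv p) x - A * lam * lam * cosh (lam * x) := by
    rw [hg']
    exact deriv_sub_mul_sinh ((hp.deriv' (n := 2)).differentiable two_ne_zero) _ _
  obtain ⟨hq, hk⟩ :=
    smooth_pasting_of_tanh (lam := lam) (A := A) hρ hσ.ne' (hpp c).ne' rfl rfl hsp
  have hg₁ : deriv g c = K / 2 := by rw [hg']; exact hk
  have hg₂ : deriv (deriv g) c = 0 := by rw [hg'']; exact sub_eq_zero.mpr hq.symm
  have hconv : ∀ x ∈ Icc 0 c, 0 ≤ deriv (deriv g) x := fun x hx => by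
    rw [hg'']
    exact deriv_deriv_sub_mul_cosh_nonneg (antitoneOn_deriv_deriv hp hppp) (hpp c) hq hx
  have hslope := deriv_mem_Icc_of_even_of_deriv_deriv_nonneg hc.le hg hg_even hconv
  rw [hu]
  refine ⟨evenAffineContinuation_neg hg_even,
    contDiff_evenAffineContinuation hc hg_even hg hg₁ hg₂, fun x hx => ?_, fun x hx => ?_,
    abs_deriv_evenAffineContinuation_le hc hg_even hg_diff hg₁ fun x hx => ?_⟩
  · rw [deriv_deriv_evenAffineContinuation hg hg₁ hg₂ (by linarith [hx.1]), if_pos hx.2]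
    exact hconv x hx
  · rw [deriv_evenAffineContinuation hg_diff hg₁ (by linarith [hx.1]), if_pos hx.2, ← hg₁]
    exact hslope x hx
  · rw [abs_of_nonneg (hslope x hx).1, ← hg₁]
    exact (hslope x hx).2

/-- Properties of the explicit `C²` value function of the one-dimensional singular control
problem: `u` is even, twice continuously differentiable, convex on `[0, c]`, satisfies
`0 ≤ u' ≤ K/2` on `[0, c]` and the gradient constraint `|u'| ≤ K/2` on all of `ℝ`. -/
theorem explicit_one_dim_value_function_properties
    (ρ σ K : ℝ) (hρ : 0 < ρ) (hσ : 0 < σ) (hK : 0 < K)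
    (p : ℝ → ℝ) (hp : ContDiff ℝ 3 p) (heven : ∀ x, p (-x) = p x)
    (hpp : ∀ x, 0 < deriv (deriv p) x)
    (hppp : ∀ x ≥ (0:ℝ), deriv (deriv (deriv p)) x ≤ 0)
    (c : ℝ) (hc : 0 < c)
    (hsp : σ / Real.sqrt (2 * ρ) * Real.tanh (Real.sqrt (2 * ρ) / σ * c)
        = (deriv p c - K / 2) / deriv (deriv p) c) :
    let lam : ℝ := Real.sqrt (2 * ρ) / σ
    let A : ℝ := σ ^ 2 * deriv (deriv p) c / (2 * ρ * Real.cosh (lam * c))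
    let u : ℝ → ℝ := fun x =>
      if |x| ≤ c then p x - A * Real.cosh (lam * x)
      else (p c - A * Real.cosh (lam * c)) + K / 2 * (|x| - c)
    (∀ x : ℝ, u (-x) = u x) ∧
    ContDiff ℝ 2 u ∧
    (∀ x ∈ Set.Icc (0:ℝ) c, 0 ≤ deriv (deriv u) x) ∧
    (∀ x ∈ Set.Icc (0:ℝ) c, 0 ≤ deriv u x ∧ deriv u x ≤ K / 2) ∧
    (∀ x : ℝ, |deriv u x| ≤ K / 2) :=
  explicit_one_dim_value_function_properties_general ρ σ K hρ hσ p hp heven hpp hppp c hc hsp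
end

section
/- Let c > 0 and let f : [0, ∞) → ℝ be continuous with f(0) ∈ [−c, c]. Then there exists a unique pair (η⁺, η⁻) of continuous nondecreasing functions from [0, ∞) to ℝ with η⁺(0) = η⁻(0) = 0 such that the function y(t) = f(t) − η⁺(t) + η⁻(t) satisfies y(t) ∈ [−c, c] for all t ≥ 0, η⁺ is constant on every interval on which y < c, and η⁻ is constant on every interval on which y > −c. -/
/-!
With `P = η⁺` and `Q = η⁻`, a solution is obtained from the coupled running-maximum equations
`P t = sup_{s ≤ t} (F s + Q s - c)⁺` and `Q t = sup_{s ≤ t} (-F s + P s - c)⁺`, solved by the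
pointwise supremum of their Picard iterates started at `0`. On `[0, T]` the iterates stay below
the supersolution `t ↦ M + K t`, where `|F| ≤ M` and, by uniform continuity,
`F r - F s ≤ 2c + K (s - r)`.
A monotone solution of the equations cannot jump: a jump of `P` forces `y = F - P + Q` to equal `c`
at the jump, a jump of `Q` forces `y = -c`, both at once is impossible as `c > 0`, and a jump of one
alone contradicts `F + Q - c ≤ P` and `-F + P - c ≤ Q` just before it. Continuity then yields the
flatness conditions by compactness.

Uniqueness is a first-crossing argument. Where `y₁ - y₂` first reaches a positive level, `y₁ > -c`
and `y₂ < c`, so `η⁻₁` and `η⁺₂` are constant just before, and `y₁ - y₂` cannot have increased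
there. Once `y₁ = y₂`, the difference `η⁺₂ - η⁺₁ = η⁻₂ - η⁻₁` is constant just before every time,
because `y` cannot be at `c` and at `-c` simultaneously.
-/

open Set Filter Topology Function NNReal

section RunningSup

variable {τ : Type*} [LinearOrder τ] {φ ψ : τ → ℝ} {s t a b : τ} {K : ℝ}

noncomputable def runningSup (φ : τ → ℝ) (t : τ) : ℝ := sSup (insert 0 (φ '' Iic t))

lemma runningSup_nonneg (φ : τ → ℝ) (t : τ) : 0 ≤ runningSup φ t := by
  by_cases hb : BddAbove (insert 0 (φ '' Iic t))
  · exact le_csSup hb (mem_insert _ _)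
  · rw [runningSup, Real.sSup_of_not_bddAbove hb]

lemma le_runningSup (hb : BddAbove (φ '' Iic t)) (hs : s ≤ t) : φ s ≤ runningSup φ t :=
  le_csSup (hb.insert 0) (mem_insert_of_mem _ (mem_image_of_mem φ hs))

lemma runningSup_le (hK : 0 ≤ K) (h : ∀ s ≤ t, φ s ≤ K) : runningSup φ t ≤ K :=
  csSup_le (insert_nonempty _ _) <| by
    rintro _ (rfl | ⟨s, hs, rfl⟩)
    exacts [hK, h s hs]

lemma runningSup_le_max (hb : BddAbove (φ '' Iic a)) (h : ∀ s ∈ Ioc a b, φ s ≤ K) :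
    runningSup φ b ≤ max (runningSup φ a) K :=
  runningSup_le (le_max_of_le_left (runningSup_nonneg φ a)) fun s hs =>
    (le_or_gt s a).elim (fun hsa => le_max_of_le_left (le_runningSup hb hsa))
      fun has => le_max_of_le_right (h s ⟨has, hs⟩)

lemma runningSup_mono (hb : BddAbove (ψ '' Iic t)) (h : ∀ s ≤ t, φ s ≤ ψ s) :
    runningSup φ t ≤ runningSup ψ t :=
  runningSup_le (runningSup_nonneg ψ t) fun s hs => (h s hs).trans (le_runningSup hb hs)

lemma monotone_runningSup (hb : ∀ t, BddAbove (φ '' Iic t)) : Monotone (runningSup φ) :=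
  fun _ b hab =>
    runningSup_le (runningSup_nonneg φ b) fun _ hs => le_runningSup (hb b) (hs.trans hab)

lemma runningSup_bot [OrderBot τ] (φ : τ → ℝ) : runningSup φ ⊥ = max 0 (φ ⊥) := by
  rw [runningSup, Iic_bot, image_singleton, csSup_pair]

end RunningSup

lemma bddAbove_image_Iic_add {τ : Type*} [ConditionallyCompleteLinearOrderBot τ]
    [TopologicalSpace τ] [OrderTopology τ] {F Q : τ → ℝ} (hF : Continuous F) (hQ : Monotone Q)
    (c : ℝ) (t : τ) : BddAbove ((fun s => F s + Q s - c) '' Iic t) := by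
  obtain ⟨M, hM⟩ := (isCompact_Icc.bddAbove_image hF.continuousOn : BddAbove (F '' Icc ⊥ t))
  refine ⟨M + Q t - c, ?_⟩
  rintro _ ⟨s, hs, rfl⟩
  linarith [hM (mem_image_of_mem F ⟨bot_le, hs⟩), hQ hs]

-- `(p₀, q₀)` and `(p₁, q₁)` are the values of `(P, Q)` just before and just after a time where
-- `F = x`.
lemma eq_and_eq_of_reflection {c x p₀ p₁ q₀ q₁ : ℝ} (hc : 0 < c) (hp : p₀ ≤ p₁) (hq : q₀ ≤ q₁)
    (hp₀ : x + q₀ - c ≤ p₀) (hq₀ : -x + p₀ - c ≤ q₀)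
    (hp₁ : p₀ < p₁ → p₁ ≤ x + q₁ - c) (hq₁ : q₀ < q₁ → q₁ ≤ -x + p₁ - c) :
    p₁ = p₀ ∧ q₁ = q₀ := by
  rcases hp.lt_or_eq with hp | rfl <;> rcases hq.lt_or_eq with hq | rfl
  · linarith [hp₁ hp, hq₁ hq]
  · linarith [hp₁ hp]
  · linarith [hq₁ hq]
  · exact ⟨rfl, rfl⟩

section Solutions

variable {τ : Type*}

structure IsSkorokhodSolution [TopologicalSpace τ] [Preorder τ] [OrderBot τ]
    (c : ℝ) (F P Q : τ → ℝ) : Prop where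
  continuous_upper : Continuous P
  continuous_lower : Continuous Q
  monotone_upper : Monotone P
  monotone_lower : Monotone Q
  upper_bot : P ⊥ = 0
  lower_bot : Q ⊥ = 0
  mem_Icc : ∀ t, F t - P t + Q t ∈ Icc (-c) c
  upper_eq_of_lt : ∀ t₁ t₂, t₁ ≤ t₂ →
    (∀ s, t₁ ≤ s → s ≤ t₂ → F s - P s + Q s < c) → P t₁ = P t₂
  lower_eq_of_gt : ∀ t₁ t₂, t₁ ≤ t₂ →
    (∀ s, t₁ ≤ s → s ≤ t₂ → -c < F s - P s + Q s) → Q t₁ = Q t₂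

structure IsRunningMaxPair [LinearOrder τ] (c : ℝ) (F P Q : τ → ℝ) : Prop where
  monotone_upper : Monotone P
  monotone_lower : Monotone Q
  upper_eq : P = runningSup fun s => F s + Q s - c
  lower_eq : Q = runningSup fun s => (-F) s + P s - c

lemma IsSkorokhodSolution.continuous_output [TopologicalSpace τ] [Preorder τ] [OrderBot τ]
    {c : ℝ} {F P Q : τ → ℝ} (hF : Continuous F) (h : IsSkorokhodSolution c F P Q) :
    Continuous fun t => F t - P t + Q t :=
  (hF.sub h.continuous_upper).add h.continuous_lower

lemma IsRunningMaxPair.symm [LinearOrder τ] {c : ℝ} {F P Q : τ → ℝ}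
    (h : IsRunningMaxPair c F P Q) : IsRunningMaxPair c (-F) Q P where
  monotone_upper := h.monotone_lower
  monotone_lower := h.monotone_upper
  upper_eq := h.lower_eq
  lower_eq := by simpa only [neg_neg] using h.upper_eq

lemma IsRunningMaxPair.bot_eq [LinearOrder τ] [OrderBot τ] {c : ℝ} {F P Q : τ → ℝ}
    (hc : 0 < c) (hF0 : F ⊥ ∈ Icc (-c) c) (h : IsRunningMaxPair c F P Q) :
    P ⊥ = 0 ∧ Q ⊥ = 0 := by
  have hP := congrFun h.upper_eq ⊥
  have hQ := congrFun h.lower_eq ⊥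
  rw [runningSup_bot] at hP hQ
  refine eq_and_eq_of_reflection (x := F ⊥) hc (hP ▸ le_max_left _ _) (hQ ▸ le_max_left _ _)
    (by linarith [hF0.2]) (by linarith [hF0.1]) (fun hpos => ?_) (fun hpos => ?_)
  · rw [hP] at hpos ⊢
    exact (max_eq_right_of_lt ((lt_max_iff.1 hpos).resolve_left (lt_irrefl 0))).le
  · rw [hQ] at hpos ⊢
    exact (max_eq_right_of_lt ((lt_max_iff.1 hpos).resolve_left (lt_irrefl 0))).le

end Solutions

section Uniqueness

variable {τ : Type*} [ConditionallyCompleteLinearOrderBot τ] [TopologicalSpace τ]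
  [OrderTopology τ]

lemma nonpos_of_le_eventually_nhdsLT [DenselyOrdered τ] {d : τ → ℝ} (hd : Continuous d)
    (h0 : d ⊥ ≤ 0) (h : ∀ t, 0 < d t → ∀ᶠ s in 𝓝[<] t, d t ≤ d s) (T : τ) : d T ≤ 0 := by
  by_contra! hT
  set S := Iic T ∩ {s | d T ≤ d s}
  have hSb : BddBelow S := OrderBot.bddBelow S
  have hu : sInf S ∈ S := (isClosed_Iic.inter (isClosed_le continuous_const hd)).csInf_mem
    ⟨T, mem_Iic.2 le_rfl, le_refl (d T)⟩ hSb
  have hpos : 0 < d (sInf S) := hT.trans_le hu.2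
  have hbot : ⊥ < sInf S := bot_lt_iff_ne_bot.2 fun h => by rw [h] at hpos; linarith
  have := nhdsLT_neBot_of_exists_lt ⟨⊥, hbot⟩
  obtain ⟨s, hs, hsu⟩ := ((h _ hpos).and self_mem_nhdsWithin).exists
  exact (csInf_le hSb ⟨hsu.le.trans hu.1, hu.2.trans hs⟩).not_gt hsu

lemma eventually_nhdsLT_eq_of_mem_nhds {β : Type*} {P : τ → β} {V : Set τ} {t : τ}
    (hV : V ∈ 𝓝 t)
    (hP : ∀ t₁ t₂, t₁ ≤ t₂ → (∀ s, t₁ ≤ s → s ≤ t₂ → s ∈ V) → P t₁ = P t₂) :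
    ∀ᶠ s in 𝓝[<] t, P s = P t := by
  rcases eq_bot_or_bot_lt t with rfl | ht
  · simp
  obtain ⟨l, hlt, hl⟩ := exists_Ioc_subset_of_mem_nhds hV ⟨⊥, ht⟩
  filter_upwards [Ioo_mem_nhdsLT hlt] with s hs
  exact hP s t hs.2.le fun r hr hrt => hl ⟨hs.1.trans_le hr, hrt⟩

namespace IsSkorokhodSolution

variable {c : ℝ} {F P Q P₁ Q₁ P₂ Q₂ : τ → ℝ}

lemma eventually_upper_eq (hF : Continuous F) (h : IsSkorokhodSolution c F P Q) {t : τ}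
    (ht : F t - P t + Q t < c) : ∀ᶠ s in 𝓝[<] t, P s = P t :=
  eventually_nhdsLT_eq_of_mem_nhds
    ((isOpen_lt (h.continuous_output hF) continuous_const).mem_nhds ht) h.upper_eq_of_lt

lemma eventually_lower_eq (hF : Continuous F) (h : IsSkorokhodSolution c F P Q) {t : τ}
    (ht : -c < F t - P t + Q t) : ∀ᶠ s in 𝓝[<] t, Q s = Q t :=
  eventually_nhdsLT_eq_of_mem_nhds
    ((isOpen_lt continuous_const (h.continuous_output hF)).mem_nhds ht) h.lower_eq_of_gt

variable [DenselyOrdered τ]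

lemma output_le (hF : Continuous F) (h₁ : IsSkorokhodSolution c F P₁ Q₁)
    (h₂ : IsSkorokhodSolution c F P₂ Q₂) (t : τ) :
    F t - P₁ t + Q₁ t ≤ F t - P₂ t + Q₂ t := by
  suffices (P₂ t - Q₂ t) - (P₁ t - Q₁ t) ≤ 0 by linarith
  refine nonpos_of_le_eventually_nhdsLT (d := fun t => (P₂ t - Q₂ t) - (P₁ t - Q₁ t))
    ((h₂.continuous_upper.sub h₂.continuous_lower).sub
      (h₁.continuous_upper.sub h₁.continuous_lower))
    (by simp [h₁.upper_bot, h₁.lower_bot, h₂.upper_bot, h₂.lower_bot]) (fun t ht => ?_) t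
  have hy₁ : -c < F t - P₁ t + Q₁ t := by linarith [(h₂.mem_Icc t).1]
  have hy₂ : F t - P₂ t + Q₂ t < c := by linarith [(h₁.mem_Icc t).2]
  filter_upwards [h₁.eventually_lower_eq hF hy₁, h₂.eventually_upper_eq hF hy₂,
    self_mem_nhdsWithin] with s hQ₁ hP₂ hst
  linarith [h₁.monotone_upper hst.le, h₂.monotone_lower hst.le]

lemma upper_le_of_output_eq (hc : 0 < c) (hF : Continuous F)
    (h₁ : IsSkorokhodSolution c F P₁ Q₁) (h₂ : IsSkorokhodSolution c F P₂ Q₂)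
    (hy : ∀ t, F t - P₁ t + Q₁ t = F t - P₂ t + Q₂ t) (t : τ) : P₂ t ≤ P₁ t := by
  suffices P₂ t - P₁ t ≤ 0 by linarith
  refine nonpos_of_le_eventually_nhdsLT (d := fun t => P₂ t - P₁ t)
    (h₂.continuous_upper.sub h₁.continuous_upper) (by simp [h₁.upper_bot, h₂.upper_bot])
    (fun t _ => ?_) t
  rcases lt_or_ge (F t - P₁ t + Q₁ t) c with hlt | hge
  · filter_upwards [h₁.eventually_upper_eq hF hlt, h₂.eventually_upper_eq hF (hy t ▸ hlt)]
      with s hs₁ hs₂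
    rw [hs₁, hs₂]
  · have hgt : -c < F t - P₁ t + Q₁ t := by linarith
    filter_upwards [h₁.eventually_lower_eq hF hgt, h₂.eventually_lower_eq hF (hy t ▸ hgt)]
      with s hs₁ hs₂
    linarith [hy s, hy t]

theorem unique (hc : 0 < c) (hF : Continuous F) (h₁ : IsSkorokhodSolution c F P₁ Q₁)
    (h₂ : IsSkorokhodSolution c F P₂ Q₂) : P₁ = P₂ ∧ Q₁ = Q₂ := by
  have hy t : F t - P₁ t + Q₁ t = F t - P₂ t + Q₂ t :=
    le_antisymm (h₁.output_le hF h₂ t) (h₂.output_le hF h₁ t)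
  have hP : P₁ = P₂ := funext fun t =>
    le_antisymm (h₂.upper_le_of_output_eq hc hF h₁ (fun s => (hy s).symm) t)
      (h₁.upper_le_of_output_eq hc hF h₂ hy t)
  exact ⟨hP, funext fun t => by linarith [hy t, congrFun hP t]⟩

end IsSkorokhodSolution

end Uniqueness

namespace IsRunningMaxPair

variable {τ : Type*} [ConditionallyCompleteLinearOrderBot τ] [TopologicalSpace τ]
  [OrderTopology τ] {c : ℝ} {F P Q : τ → ℝ}

lemma le_upper (hF : Continuous F) (h : IsRunningMaxPair c F P Q) (t : τ) :
    F t + Q t - c ≤ P t := by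
  rw [h.upper_eq]
  exact le_runningSup (bddAbove_image_Iic_add hF h.monotone_lower c t) le_rfl

lemma upper_le_max (hF : Continuous F) (h : IsRunningMaxPair c F P Q) {a b : τ} {K : ℝ}
    (hK : ∀ s ∈ Ioc a b, F s + Q s - c ≤ K) : P b ≤ max (P a) K := by
  rw [h.upper_eq]
  exact runningSup_le_max (bddAbove_image_Iic_add hF h.monotone_lower c a) hK

lemma rightLim_upper_le [DenselyOrdered τ] [NoMaxOrder τ] (hF : Continuous F)
    (h : IsRunningMaxPair c F P Q) (t : τ) (hlt : P t < rightLim P t) :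
    rightLim P t ≤ F t + rightLim Q t - c := by
  refine le_of_forall_pos_le_add fun ε hε => ?_
  obtain ⟨m, htm, hm⟩ := exists_Ico_subset_of_mem_nhds
    ((hF.tendsto t).eventually (gt_mem_nhds (lt_add_of_pos_right (F t) hε))) (exists_gt t)
  have hnear : ∀ᶠ u in 𝓝[>] t, P u ≤ max (P t) (F t + ε + Q u - c) := by
    filter_upwards [Ioo_mem_nhdsGT htm] with u hu
    refine h.upper_le_max hF fun s hs => ?_
    have hFs : F s < F t + ε := hm ⟨hs.1.le, hs.2.trans_lt hu.2⟩
    linarith [h.monotone_lower hs.2]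
  have hlim := le_of_tendsto_of_tendsto (h.monotone_upper.tendsto_rightLim t)
    (tendsto_const_nhds.max (((h.monotone_lower.tendsto_rightLim t).const_add _).sub_const c))
    hnear
  linarith [(le_max_iff.1 hlim).resolve_left hlt.not_ge]

lemma upper_le_of_leftLim_lt [DenselyOrdered τ] (hF : Continuous F)
    (h : IsRunningMaxPair c F P Q) (t : τ) (hlt : leftLim P t < P t) :
    P t ≤ F t + Q t - c := by
  rcases eq_bot_or_bot_lt t with rfl | ht
  · rw [leftLim_eq_of_eq_bot P (by simp)] at hlt
    exact absurd hlt (lt_irrefl _)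
  have := nhdsLT_neBot_of_exists_lt ⟨⊥, ht⟩
  refine le_of_forall_pos_le_add fun ε hε => ?_
  obtain ⟨l, hlt', hl⟩ := exists_Ioc_subset_of_mem_nhds
    ((hF.tendsto t).eventually (gt_mem_nhds (lt_add_of_pos_right (F t) hε))) ⟨⊥, ht⟩
  have hnear : ∀ᶠ a in 𝓝[<] t, P t ≤ max (P a) (F t + ε + Q t - c) := by
    filter_upwards [Ioo_mem_nhdsLT hlt'] with a ha
    refine h.upper_le_max hF fun s hs => ?_
    have hFs : F s < F t + ε := hl ⟨ha.1.trans hs.1, hs.2⟩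
    linarith [h.monotone_lower hs.2]
  have hlim := ge_of_tendsto ((h.monotone_upper.tendsto_leftLim t).max tendsto_const_nhds) hnear
  linarith [(le_max_iff.1 hlim).resolve_left hlt.not_ge]

lemma le_leftLim_upper [DenselyOrdered τ] (hF : Continuous F) (h : IsRunningMaxPair c F P Q)
    (t : τ) : F t + leftLim Q t - c ≤ leftLim P t := by
  rcases eq_bot_or_bot_lt t with rfl | ht
  · rw [leftLim_eq_of_eq_bot P (by simp), leftLim_eq_of_eq_bot Q (by simp)]
    exact h.le_upper hF ⊥
  have := nhdsLT_neBot_of_exists_lt ⟨⊥, ht⟩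
  exact le_of_tendsto_of_tendsto
    ((((hF.tendsto t).mono_left nhdsWithin_le_nhds).add
      (h.monotone_lower.tendsto_leftLim t)).sub_const c)
    (h.monotone_upper.tendsto_leftLim t) (Eventually.of_forall (h.le_upper hF))

theorem continuous [DenselyOrdered τ] [NoMaxOrder τ] (hc : 0 < c) (hF : Continuous F)
    (h : IsRunningMaxPair c F P Q) : Continuous P ∧ Continuous Q := by
  have hright t := eq_and_eq_of_reflection hc (h.monotone_upper.le_rightLim le_rfl)
    (h.monotone_lower.le_rightLim le_rfl) (h.le_upper hF t) (h.symm.le_upper hF.neg t)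
    (h.rightLim_upper_le hF t) (h.symm.rightLim_upper_le hF.neg t)
  have hleft t := eq_and_eq_of_reflection hc (h.monotone_upper.leftLim_le le_rfl)
    (h.monotone_lower.leftLim_le le_rfl) (h.le_leftLim_upper hF t)
    (h.symm.le_leftLim_upper hF.neg t) (h.upper_le_of_leftLim_lt hF t)
    (h.symm.upper_le_of_leftLim_lt hF.neg t)
  refine ⟨continuous_iff_continuousAt.2 fun t => ?_, continuous_iff_continuousAt.2 fun t => ?_⟩
  · rw [h.monotone_upper.continuousAt_iff_leftLim_eq_rightLim, (hright t).1, ← (hleft t).1]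
  · rw [h.monotone_lower.continuousAt_iff_leftLim_eq_rightLim, (hright t).2, ← (hleft t).2]

lemma upper_eq_of_lt (hF : Continuous F) (h : IsRunningMaxPair c F P Q) (hQ : Continuous Q)
    {t₁ t₂ : τ} (hle : t₁ ≤ t₂) (hy : ∀ s, t₁ ≤ s → s ≤ t₂ → F s - P s + Q s < c) :
    P t₁ = P t₂ := by
  obtain ⟨s, hs, hmax⟩ := isCompact_Icc.exists_isMaxOn (nonempty_Icc.2 hle)
    (f := fun s => F s + Q s - c) (by fun_prop)
  have h₁ : P t₂ ≤ max (P t₁) (F s + Q s - c) :=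
    h.upper_le_max hF fun r hr => hmax ⟨hr.1.le, hr.2⟩
  have h₂ : F s + Q s - c < P t₂ := by linarith [hy s hs.1 hs.2, h.monotone_upper hs.2]
  exact le_antisymm (h.monotone_upper hle) ((le_max_iff.1 h₁).resolve_right h₂.not_ge)

theorem isSkorokhodSolution [DenselyOrdered τ] [NoMaxOrder τ] (hc : 0 < c) (hF : Continuous F)
    (hF0 : F ⊥ ∈ Icc (-c) c) (h : IsRunningMaxPair c F P Q) : IsSkorokhodSolution c F P Q where
  continuous_upper := (h.continuous hc hF).1
  continuous_lower := (h.continuous hc hF).2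
  monotone_upper := h.monotone_upper
  monotone_lower := h.monotone_lower
  upper_bot := (h.bot_eq hc hF0).1
  lower_bot := (h.bot_eq hc hF0).2
  mem_Icc t := by
    have hlower := h.symm.le_upper hF.neg t
    have hupper := h.le_upper hF t
    simp only [Pi.neg_apply] at hlower
    exact ⟨by linarith, by linarith⟩
  upper_eq_of_lt _ _ := h.upper_eq_of_lt hF (h.continuous hc hF).2
  lower_eq_of_gt _ _ hle hy := h.symm.upper_eq_of_lt hF.neg (h.continuous hc hF).1 hle
    fun s h₁ h₂ => by simp only [Pi.neg_apply]; linarith [hy s h₁ h₂]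

end IsRunningMaxPair

section Iteration

variable {τ : Type*} [LinearOrder τ] {c : ℝ} {F : τ → ℝ}

noncomputable def skorokhodIter (c : ℝ) (F : τ → ℝ) : ℕ → (τ → ℝ) × (τ → ℝ)
  | 0 => (0, 0)
  | n + 1 => (runningSup fun s => F s + (skorokhodIter c F n).2 s - c,
      runningSup fun s => (-F) s + (skorokhodIter c F n).1 s - c)

noncomputable def skorokhodLim (c : ℝ) (F : τ → ℝ) : (τ → ℝ) × (τ → ℝ) :=
  (fun t => ⨆ n, (skorokhodIter c F n).1 t, fun t => ⨆ n, (skorokhodIter c F n).2 t)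

lemma skorokhodIter_neg (c : ℝ) (F : τ → ℝ) (n : ℕ) :
    skorokhodIter c (-F) n = (skorokhodIter c F n).swap := by
  induction n with
  | zero => rfl
  | succ n ih =>
    simp only [skorokhodIter, ih, Prod.fst_swap, Prod.snd_swap, neg_neg, Prod.swap_prod_mk]

lemma skorokhodLim_neg (c : ℝ) (F : τ → ℝ) :
    skorokhodLim c (-F) = (skorokhodLim c F).swap := by
  simp only [skorokhodLim, skorokhodIter_neg, Prod.fst_swap, Prod.snd_swap, Prod.swap_prod_mk]

lemma skorokhodIter_le_skorokhodLim
    (hb : ∀ t, BddAbove (range fun n => (skorokhodIter c F n).1 t) ∧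
      BddAbove (range fun n => (skorokhodIter c F n).2 t)) (n : ℕ) (t : τ) :
    (skorokhodIter c F n).1 t ≤ (skorokhodLim c F).1 t ∧
      (skorokhodIter c F n).2 t ≤ (skorokhodLim c F).2 t :=
  ⟨le_ciSup (hb t).1 n, le_ciSup (hb t).2 n⟩

end Iteration

section IterationBounds

variable {τ : Type*} [ConditionallyCompleteLinearOrderBot τ] [TopologicalSpace τ]
  [OrderTopology τ] {c : ℝ} {F : τ → ℝ}

lemma monotone_skorokhodIter (hF : Continuous F) :
    ∀ n, Monotone (skorokhodIter c F n).1 ∧ Monotone (skorokhodIter c F n).2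
  | 0 => ⟨fun _ _ _ => le_rfl, fun _ _ _ => le_rfl⟩
  | n + 1 => ⟨monotone_runningSup (bddAbove_image_Iic_add hF (monotone_skorokhodIter hF n).2 c),
      monotone_runningSup (bddAbove_image_Iic_add hF.neg (monotone_skorokhodIter hF n).1 c)⟩

lemma skorokhodIter_le (hF : Continuous F) {P' Q' : τ → ℝ} (hP' : Monotone P')
    (hQ' : Monotone Q') {T : τ} (hsupP : ∀ t ≤ T, runningSup (fun s => F s + Q' s - c) t ≤ P' t)
    (hsupQ : ∀ t ≤ T, runningSup (fun s => (-F) s + P' s - c) t ≤ Q' t) :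
    ∀ n, ∀ t ≤ T, (skorokhodIter c F n).1 t ≤ P' t ∧ (skorokhodIter c F n).2 t ≤ Q' t
  | 0, t, ht => ⟨(runningSup_nonneg _ t).trans (hsupP t ht),
      (runningSup_nonneg _ t).trans (hsupQ t ht)⟩
  | n + 1, t, ht =>
    ⟨(runningSup_mono (bddAbove_image_Iic_add hF hQ' c t) fun s hs => by
        linarith [(skorokhodIter_le hF hP' hQ' hsupP hsupQ n s (hs.trans ht)).2]).trans
        (hsupP t ht),
      (runningSup_mono (bddAbove_image_Iic_add hF.neg hP' c t) fun s hs => by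
        linarith [(skorokhodIter_le hF hP' hQ' hsupP hsupQ n s (hs.trans ht)).1]).trans
        (hsupQ t ht)⟩

lemma monotone_skorokhodLim (hF : Continuous F)
    (hb : ∀ t, BddAbove (range fun n => (skorokhodIter c F n).1 t) ∧
      BddAbove (range fun n => (skorokhodIter c F n).2 t)) :
    Monotone (skorokhodLim c F).1 ∧ Monotone (skorokhodLim c F).2 :=
  ⟨fun _ b hab => ciSup_mono (hb b).1 fun n => (monotone_skorokhodIter hF n).1 hab,
    fun _ b hab => ciSup_mono (hb b).2 fun n => (monotone_skorokhodIter hF n).2 hab⟩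

lemma skorokhodLim_fst_eq (hF : Continuous F)
    (hb : ∀ t, BddAbove (range fun n => (skorokhodIter c F n).1 t) ∧
      BddAbove (range fun n => (skorokhodIter c F n).2 t)) :
    (skorokhodLim c F).1 = runningSup fun s => F s + (skorokhodLim c F).2 s - c := by
  have hle := skorokhodIter_le_skorokhodLim hb
  funext t
  apply le_antisymm
  · refine ciSup_le fun n => ?_
    cases n with
    | zero => exact runningSup_nonneg _ t
    | succ n =>
      exact runningSup_mono (bddAbove_image_Iic_add hF (monotone_skorokhodLim hF hb).2 c t)
        fun s _ => by linarith [(hle n s).2]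
  · refine runningSup_le (hle 0 t).1 fun s hs => ?_
    have : (skorokhodLim c F).2 s ≤ (skorokhodLim c F).1 t - F s + c := ciSup_le fun n => by
      have : F s + (skorokhodIter c F n).2 s - c ≤ (skorokhodIter c F (n + 1)).1 t :=
        le_runningSup (bddAbove_image_Iic_add hF (monotone_skorokhodIter hF n).2 c t) hs
      linarith [(hle (n + 1) t).1]
    linarith

theorem isRunningMaxPair_skorokhodLim (hF : Continuous F)
    (hb : ∀ t, BddAbove (range fun n => (skorokhodIter c F n).1 t) ∧
      BddAbove (range fun n => (skorokhodIter c F n).2 t)) :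
    IsRunningMaxPair c F (skorokhodLim c F).1 (skorokhodLim c F).2 := by
  have hb' t : BddAbove (range fun n => (skorokhodIter c (-F) n).1 t) ∧
      BddAbove (range fun n => (skorokhodIter c (-F) n).2 t) := by
    simpa only [skorokhodIter_neg, Prod.fst_swap, Prod.snd_swap] using (hb t).symm
  have hneg := skorokhodLim_fst_eq hF.neg hb'
  rw [skorokhodLim_neg] at hneg
  exact ⟨(monotone_skorokhodLim hF hb).1, (monotone_skorokhodLim hF hb).2,
    skorokhodLim_fst_eq hF hb, hneg⟩

end IterationBounds

section HalfLine

variable {c : ℝ} {F : ℝ≥0 → ℝ}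

lemma exists_oscillation_le_affine (hc : 0 < c) (hF : Continuous F) (T : ℝ≥0) :
    ∃ M K : ℝ, 0 ≤ K ∧ (∀ s ≤ T, |F s| ≤ M) ∧
      ∀ r s, r ≤ s → s ≤ T → F r - F s ≤ 2 * c + K * (s - r) := by
  have hT : IsCompact (Icc 0 T) := isCompact_Icc
  obtain ⟨M, hM⟩ := hT.exists_bound_of_continuousOn hF.continuousOn
  obtain ⟨δ, hδ, hunif⟩ := Metric.uniformContinuousOn_iff_le.1
    (hT.uniformContinuousOn_of_continuous hF.continuousOn) (2 * c) (by positivity)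
  have hM' s (hs : s ≤ T) : |F s| ≤ M := hM s ⟨zero_le, hs⟩
  have hM0 : 0 ≤ M := (abs_nonneg _).trans (hM' 0 zero_le)
  refine ⟨M, 2 * M / δ, by positivity, hM', fun r s hrs hsT => ?_⟩
  have hsr : (0 : ℝ) ≤ s - r := sub_nonneg.2 (NNReal.coe_le_coe.2 hrs)
  by_cases hclose : (s : ℝ) - r ≤ δ
  · have := hunif r ⟨zero_le, hrs.trans hsT⟩ s ⟨zero_le, hsT⟩
      (by rwa [NNReal.dist_eq, abs_sub_comm, abs_of_nonneg hsr])
    rw [Real.dist_eq] at this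
    have hK : 0 ≤ 2 * M / δ * (s - r) := mul_nonneg (by positivity) hsr
    linarith [le_abs_self (F r - F s)]
  · have : 2 * M ≤ 2 * M / δ * (s - r) := by
      rw [div_mul_eq_mul_div, le_div_iff₀ hδ]
      nlinarith
    linarith [abs_le.1 (hM' r (hrs.trans hsT)), abs_le.1 (hM' s hsT)]

lemma exists_supersolution (hc : 0 < c) (hF : Continuous F) (T : ℝ≥0) :
    ∃ Q' : ℝ≥0 → ℝ, Monotone Q' ∧ ∀ t ≤ T,
      runningSup (fun s => (-F) s + runningSup (fun r => F r + Q' r - c) s - c) t ≤ Q' t := by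
  obtain ⟨M, K, hK, hM, hosc⟩ := exists_oscillation_le_affine hc hF T
  have hM0 : 0 ≤ M := (abs_nonneg _).trans (hM 0 zero_le)
  refine ⟨fun t => M + K * t, fun a b hab =>
    add_le_add_right (mul_le_mul_of_nonneg_left (NNReal.coe_le_coe.2 hab) hK) M, fun t ht => ?_⟩
  refine runningSup_le (by positivity) fun s hst => ?_
  have hP : runningSup (fun r => F r + (M + K * r) - c) s ≤ F s + c + (M + K * s) := by
    refine runningSup_le (by nlinarith [neg_abs_le (F s), hM s (hst.trans ht)]) fun r hrs => ?_
    linarith [hosc r s hrs (hst.trans ht)]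
  have : K * s ≤ K * t := mul_le_mul_of_nonneg_left (NNReal.coe_le_coe.2 hst) hK
  simp only [Pi.neg_apply]
  linarith

lemma bddAbove_skorokhodIter (hc : 0 < c) (hF : Continuous F) (t : ℝ≥0) :
    BddAbove (range fun n => (skorokhodIter c F n).1 t) ∧
      BddAbove (range fun n => (skorokhodIter c F n).2 t) := by
  obtain ⟨Q', hQ', hsup⟩ := exists_supersolution hc hF t
  have hle := skorokhodIter_le hF (monotone_runningSup (bddAbove_image_Iic_add hF hQ' c)) hQ'
    (fun _ _ => le_rfl) hsup
  exact ⟨⟨_, forall_mem_range.2 fun n => (hle n t le_rfl).1⟩,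
    ⟨_, forall_mem_range.2 fun n => (hle n t le_rfl).2⟩⟩

theorem existsUnique_isSkorokhodSolution (hc : 0 < c) (hF : Continuous F)
    (hF0 : F ⊥ ∈ Icc (-c) c) :
    ∃! η : (ℝ≥0 → ℝ) × (ℝ≥0 → ℝ), IsSkorokhodSolution c F η.1 η.2 := by
  have h := (isRunningMaxPair_skorokhodLim hF
    (bddAbove_skorokhodIter hc hF)).isSkorokhodSolution hc hF hF0
  refine ⟨skorokhodLim c F, h, fun η hη => ?_⟩
  obtain ⟨h₁, h₂⟩ := hη.unique hc hF h
  exact Prod.ext h₁ h₂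

end HalfLine

/-- The deterministic two-sided Skorokhod problem on `[−c, c]`: for continuous `f` on
`[0, ∞)` starting in `[−c, c]`, there is a unique pair `(η⁺, η⁻)` of continuous
nondecreasing functions vanishing at `0` such that `y = f − η⁺ + η⁻` stays in `[−c, c]`,
`η⁺` is constant on every interval where `y < c`, and `η⁻` is constant on every interval
where `y > −c`. -/
theorem two_sided_skorokhod_problem
    (c : ℝ) (hc : 0 < c) (f : {t : ℝ // 0 ≤ t} → ℝ)
    (hf : Continuous f) (hf0 : f ⟨0, le_refl 0⟩ ∈ Set.Icc (-c) c) :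
    ∃! η : ({t : ℝ // 0 ≤ t} → ℝ) × ({t : ℝ // 0 ≤ t} → ℝ),
      Continuous η.1 ∧ Continuous η.2 ∧
      Monotone η.1 ∧ Monotone η.2 ∧
      η.1 ⟨0, le_refl 0⟩ = 0 ∧ η.2 ⟨0, le_refl 0⟩ = 0 ∧
      (∀ t, f t - η.1 t + η.2 t ∈ Set.Icc (-c) c) ∧
      (∀ t₁ t₂, t₁ ≤ t₂ →
        (∀ s, t₁ ≤ s → s ≤ t₂ → f s - η.1 s + η.2 s < c) → η.1 t₁ = η.1 t₂) ∧
      (∀ t₁ t₂, t₁ ≤ t₂ →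
        (∀ s, t₁ ≤ s → s ≤ t₂ → -c < f s - η.1 s + η.2 s) → η.2 t₁ = η.2 t₂) := by
  -- `{t : ℝ // 0 ≤ t}` is `ℝ≥0` by definition, with the same order and topology.
  refine (existsUnique_congr fun η => ?_).1 (existsUnique_isSkorokhodSolution (F := f) hc hf hf0)
  exact ⟨fun ⟨h₁, h₂, h₃, h₄, h₅, h₆, h₇, h₈, h₉⟩ => ⟨h₁, h₂, h₃, h₄, h₅, h₆, h₇, h₈, h₉⟩,
    fun ⟨h₁, h₂, h₃, h₄, h₅, h₆, h₇, h₈, h₉⟩ => ⟨h₁, h₂, h₃, h₄, h₅, h₆, h₇, h₈, h₉⟩⟩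
end
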